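/- arXiv:1306.5074 — 6 statements merged into one kernel-verified Lean document; each statement's English description precedes it below -/
import Mathlib

section
/- Let A ∈ ℂ^{m×n}, B ∈ ℂ^{m×p1}, C ∈ ℂ^{m×p2}, D ∈ ℂ^{q1×n}, E ∈ ℂ^{q2×n} be given, and for X ∈ ℂ^{p1×q1} and Y ∈ ℂ^{p2×q2} set p(X,Y) = A − BXD − CYE. Then the maximum of r(p(X,Y)) over all X ∈ ℂ^{p1×q1} and Y ∈ ℂ^{p2×q2} equals min{ r([A; D; E]), r([A B C]), r([A B; E 0]), r([A C; D 0]) }. -/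
/-!
For a single unknown, `r (A - B X D) ≤ min (r [A B]) (r [A; D])` because `A - B X D` factors
through both block matrices, and the bound is attained: choose `B X D` to vanish on `ker D` and to
map a subspace of `ker A` meeting `ker D` trivially isomorphically onto a subspace of `range B`
meeting `range A` trivially, both of dimension `min (r [A B]) (r [A; D]) - r A`.
Applied to `A - C Y E` this reduces the theorem to finding one `Y` maximizing both
`r [A - C Y E, B] = r ([A B] - C Y [E 0])` and `r [A - C Y E; D] = r ([A; D] - [C; 0] Y E)`.
Each is again a one-unknown problem, and a common maximizer exists because along a line of
matrices the rank drops only at the finitely many roots of a nonzero minor.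
-/

open Module LinearMap

namespace Submodule

variable {K V : Type*} [Field K] [AddCommGroup V] [Module K V] [FiniteDimensional K V]

theorem exists_le_finrank_eq (U : Submodule K V) {t : ℕ} (ht : t ≤ finrank K U) :
    ∃ W ≤ U, finrank K W = t := by
  let b := finBasis K U
  have hli : LinearIndependent K fun i : Fin t => (b (Fin.castLE ht i) : V) :=
    (b.linearIndependent.map' U.subtype U.ker_subtype).comp _ (Fin.castLE_injective ht)
  refine ⟨span K (Set.range fun i : Fin t => (b (Fin.castLE ht i) : V)), ?_, ?_⟩
  · exact span_le.2 (Set.range_subset_iff.2 fun i => (b _).2)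
  · rw [finrank_span_eq_card hli, Fintype.card_fin]

theorem exists_le_disjoint_finrank_eq (P Q : Submodule K V) {t : ℕ}
    (ht : t + finrank K ↥(P ⊓ Q) ≤ finrank K P) :
    ∃ W ≤ P, Disjoint W Q ∧ finrank K W = t := by
  obtain ⟨C, hC⟩ := (P ⊓ Q).exists_isCompl
  have hsup : P ⊓ Q ⊔ C ⊓ P = P := by
    rw [← sup_inf_assoc_of_le _ inf_le_left, hC.sup_eq_top, top_inf_eq]
  have hdisj : Disjoint (C ⊓ P) Q := by
    rw [disjoint_iff, eq_bot_iff]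
    calc C ⊓ P ⊓ Q = C ⊓ (P ⊓ Q) := inf_assoc _ _ _
      _ ≤ ⊥ := hC.symm.inf_eq_bot.le
  have hdim := finrank_sup_add_finrank_inf_eq (P ⊓ Q) (C ⊓ P)
  rw [hsup, disjoint_iff.1 (hdisj.mono_right inf_le_right).symm, finrank_bot] at hdim
  obtain ⟨W, hWC, hWt⟩ := exists_le_finrank_eq (C ⊓ P) (t := t) (by omega)
  exact ⟨W, hWC.trans inf_le_right, hdisj.mono_left hWC, hWt⟩

end Submodule

namespace LinearMap

variable {K U V W Q : Type*} [Field K] [AddCommGroup U] [Module K U] [AddCommGroup V]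
  [Module K V] [AddCommGroup W] [Module K W] [AddCommGroup Q] [Module K Q]

theorem exists_comp_eq_of_ker_le (d : V →ₗ[K] Q) (g : V →ₗ[K] W) (h : ker d ≤ ker g) :
    ∃ z : Q →ₗ[K] W, z ∘ₗ d = g := by
  obtain ⟨z, hz⟩ := IsSemisimpleModule.extension_property ((ker d).liftQ d le_rfl)
    (by rw [← ker_eq_bot, Submodule.ker_liftQ_eq_bot _ _ _ le_rfl]) ((ker d).liftQ g h)
  exact ⟨z, by ext x; simpa using congr($hz ((ker d).mkQ x))⟩

theorem exists_comp_comp_eq_of_range_le_of_ker_le (b : U →ₗ[K] W) (d : V →ₗ[K] Q)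
    (g : V →ₗ[K] W) (hr : range g ≤ range b) (hk : ker d ≤ ker g) :
    ∃ x : Q →ₗ[K] U, b ∘ₗ x ∘ₗ d = g := by
  let g' := g.codRestrict (range b) fun v => hr (mem_range_self g v)
  obtain ⟨z, hz⟩ := exists_comp_eq_of_ker_le d g' (by rwa [ker_codRestrict])
  obtain ⟨x, hx⟩ :=
    Module.projective_lifting_property b.rangeRestrict z b.surjective_rangeRestrict
  refine ⟨x, LinearMap.ext fun v => ?_⟩
  have hzv : (z (d v) : W) = g v := by simp [← comp_apply z d, hz, g']
  simpa [hzv] using congr(($hx (d v) : W))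

theorem exists_finrank_range_add_le_finrank_range_sub [FiniteDimensional K V]
    [FiniteDimensional K W] (f : V →ₗ[K] W) (P : Submodule K W) (N : Submodule K V) {t : ℕ}
    (hP : t + finrank K ↥(P ⊓ range f) ≤ finrank K P)
    (hN : t + finrank K ↥(ker f ⊓ N) ≤ finrank K (ker f)) :
    ∃ g : V →ₗ[K] W, range g ≤ P ∧ N ≤ ker g ∧
      finrank K (range f) + t ≤ finrank K (range (f - g)) := by
  obtain ⟨U, hUf, hUN, hUt⟩ := (ker f).exists_le_disjoint_finrank_eq N hN
  obtain ⟨R, hRP, hRf, hRt⟩ := P.exists_le_disjoint_finrank_eq (range f) hP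
  let e : U ≃ₗ[K] R := LinearEquiv.ofFinrankEq _ _ (hUt.trans hRt.symm)
  obtain ⟨S, hNS, hSU⟩ := hUN.symm.exists_isCompl
  let g : V →ₗ[K] W := R.subtype ∘ₗ e.toLinearMap ∘ₗ U.projectionOnto S hSU.symm
  have hgR : range g ≤ R := by
    rintro _ ⟨v, rfl⟩
    exact (e _).2
  -- `f - g` sends `-u ∈ U ≤ ker f` to `e u`, so its range contains `R`.
  have hRg : R ≤ range (f - g) := by
    intro w hw
    refine ⟨-(e.symm ⟨w, hw⟩ : V), ?_⟩
    have hf : f (e.symm ⟨w, hw⟩ : V) = 0 := hUf (e.symm ⟨w, hw⟩).2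
    simp [g, hf]
  have hfg : range f ≤ range (f - g) := by
    rintro _ ⟨v, rfl⟩
    simpa using add_mem (mem_range_self (f - g) v) (hRg (hgR (mem_range_self g v)))
  refine ⟨g, hgR.trans hRP, fun v hv => ?_, ?_⟩
  · simp [g, Submodule.projectionOnto_apply_of_mem_right hSU.symm (hNS hv)]
  · calc finrank K (range f) + t = finrank K ↥(range f ⊔ R) := by
          rw [← hRt, ← Submodule.finrank_sup_add_finrank_inf_eq, disjoint_iff.1 hRf.symm,
            finrank_bot, add_zero]
      _ ≤ finrank K (range (f - g)) := Submodule.finrank_mono (sup_le hfg hRg)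

end LinearMap

namespace Matrix

variable {m n p q l : Type*}

section CommSemiring

variable {R : Type*} [CommSemiring R]

theorem range_mulVecLin_fromCols [Fintype n] [Fintype p] (A : Matrix m n R) (B : Matrix m p R) :
    range (fromCols A B).mulVecLin = range A.mulVecLin ⊔ range B.mulVecLin := by
  apply le_antisymm
  · rintro _ ⟨v, rfl⟩
    rw [mulVecLin_apply, fromCols_mulVec]
    exact Submodule.add_mem_sup (mem_range_self _ _) (mem_range_self _ _)
  · refine sup_le ?_ ?_ <;> rintro _ ⟨v, rfl⟩
    · exact ⟨Sum.elim v 0, by simp⟩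
    · exact ⟨Sum.elim 0 v, by simp⟩

theorem ker_mulVecLin_fromRows [Fintype n] (A : Matrix m n R) (D : Matrix q n R) :
    ker (fromRows A D).mulVecLin = ker A.mulVecLin ⊓ ker D.mulVecLin := by
  ext v
  simp [← Sum.elim_zero_zero, Sum.elim_eq_iff]

theorem rank_fromCols_fromCols [Fintype n] [Fintype p] [Fintype q] (A : Matrix m n R)
    (B : Matrix m p R) (C : Matrix m q R) :
    (fromCols (fromCols A B) C).rank = (fromCols A (fromCols B C)).rank := by
  have h : fromCols (fromCols A B) C =
      (fromCols A (fromCols B C)).submatrix (Equiv.refl m) (Equiv.sumAssoc n p q) := by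
    ext i ((j | j) | j) <;> rfl
  rw [h, rank_submatrix]

theorem rank_fromRows_fromRows [Fintype n] (A : Matrix m n R) (D : Matrix p n R)
    (E : Matrix q n R) : (fromRows (fromRows A D) E).rank = (fromRows A (fromRows D E)).rank := by
  have h : fromRows (fromRows A D) E =
      (fromRows A (fromRows D E)).submatrix (Equiv.sumAssoc m p q) (Equiv.refl n) := by
    ext ((i | i) | i) j <;> rfl
  rw [h, rank_submatrix]

end CommSemiring

section CommRing

variable {R : Type*} [CommRing R]

theorem fromCols_sub_mul_mul_fromCols_zero [Fintype q] [Fintype l] (A : Matrix m n R)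
    (B : Matrix m p R) (C : Matrix m q R) (Y : Matrix q l R) (E : Matrix l n R) :
    fromCols A B - C * Y * fromCols E 0 = fromCols (A - C * Y * E) B := by
  ext i (j | j) <;> simp

theorem fromRows_sub_fromRows_zero_mul_mul [Fintype q] [Fintype l] (A : Matrix m n R)
    (D : Matrix p n R) (C : Matrix m q R) (Y : Matrix q l R) (E : Matrix l n R) :
    fromRows A D - fromRows C 0 * Y * E = fromRows (A - C * Y * E) D := by
  ext (i | i) j <;> simp

theorem sub_mul_add_smul_mul [Fintype p] [Fintype q] (M : Matrix m n R) (C : Matrix m p R)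
    (E : Matrix q n R) (Y₀ Y : Matrix p q R) (t : R) :
    M - C * (Y₀ + t • Y) * E = M - C * Y₀ * E + t • -(C * Y * E) := by
  simp only [Matrix.mul_add, Matrix.add_mul, Matrix.mul_smul, Matrix.smul_mul, smul_neg]
  abel

end CommRing

variable {K : Type*} [Field K]

theorem rank_fromRows_add_finrank_ker [Fintype n] (A : Matrix m n K) (D : Matrix q n K) :
    (fromRows A D).rank + finrank K ↥(ker A.mulVecLin ⊓ ker D.mulVecLin) = Fintype.card n := by
  rw [rank, ← ker_mulVecLin_fromRows, finrank_range_add_finrank_ker, finrank_fintype_fun_eq_card]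

theorem rank_sub_mul_mul_le_rank_fromCols [Fintype n] [Fintype p] [Fintype q] (A : Matrix m n K)
    (B : Matrix m p K) (X : Matrix p q K) (D : Matrix q n K) :
    (A - B * X * D).rank ≤ (fromCols A B).rank := by
  classical
  have h : fromCols A B * fromRows (1 : Matrix n n K) (-(X * D)) = A - B * X * D := by
    rw [fromCols_mul_fromRows, Matrix.mul_one, Matrix.mul_neg, Matrix.mul_assoc, sub_eq_add_neg]
  exact h ▸ rank_mul_le_left _ _

theorem rank_sub_mul_mul_le_rank_fromRows [Fintype m] [Fintype n] [Fintype p] [Fintype q]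
    (A : Matrix m n K) (B : Matrix m p K) (X : Matrix p q K) (D : Matrix q n K) :
    (A - B * X * D).rank ≤ (fromRows A D).rank := by
  classical
  have h : fromCols (1 : Matrix m m K) (-(B * X)) * fromRows A D = A - B * X * D := by
    rw [fromCols_mul_fromRows, Matrix.one_mul, Matrix.neg_mul, sub_eq_add_neg]
  exact h ▸ rank_mul_le_right _ _

theorem rank_sub_mul_mul_le_min [Fintype m] [Fintype n] [Fintype p] [Fintype q]
    (A : Matrix m n K) (B : Matrix m p K) (X : Matrix p q K) (D : Matrix q n K) :
    (A - B * X * D).rank ≤ min (fromCols A B).rank (fromRows A D).rank :=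
  le_min (rank_sub_mul_mul_le_rank_fromCols A B X D) (rank_sub_mul_mul_le_rank_fromRows A B X D)

theorem exists_mul_mul_eq_of_range_le_of_ker_le [Fintype n] [Fintype p] [Fintype q]
    (B : Matrix m p K) (D : Matrix q n K) (g : (n → K) →ₗ[K] m → K)
    (hr : range g ≤ range B.mulVecLin) (hk : ker D.mulVecLin ≤ ker g) :
    ∃ X : Matrix p q K, (B * X * D).mulVecLin = g := by
  classical
  obtain ⟨x, hx⟩ := exists_comp_comp_eq_of_range_le_of_ker_le _ _ g hr hk
  exact ⟨toMatrix' x, by rw [← hx, ← toLin'_apply', toLin'_mul, toLin'_mul, toLin'_toMatrix']; rfl⟩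

theorem exists_min_le_rank_sub_mul_mul [Fintype m] [Fintype n] [Fintype p] [Fintype q]
    (A : Matrix m n K) (B : Matrix m p K) (D : Matrix q n K) :
    ∃ X : Matrix p q K, min (fromCols A B).rank (fromRows A D).rank ≤ (A - B * X * D).rank := by
  have hcols : (fromCols A B).rank + finrank K ↥(range B.mulVecLin ⊓ range A.mulVecLin) =
      finrank K (range B.mulVecLin) + A.rank := by
    rw [rank, range_mulVecLin_fromCols, sup_comm]
    exact Submodule.finrank_sup_add_finrank_inf_eq _ _
  have hrows := rank_fromRows_add_finrank_ker A D
  have hA : A.rank + finrank K (ker A.mulVecLin) = Fintype.card n := by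
    rw [rank, finrank_range_add_finrank_ker, finrank_fintype_fun_eq_card]
  have hker := Submodule.finrank_mono (inf_le_left : ker A.mulVecLin ⊓ ker D.mulVecLin ≤ _)
  have hran := Submodule.finrank_mono (inf_le_left : range B.mulVecLin ⊓ range A.mulVecLin ≤ _)
  have hmin := min_le_left (fromCols A B).rank (fromRows A D).rank
  have hmin' := min_le_right (fromCols A B).rank (fromRows A D).rank
  -- `r [A B] - r A` and `r [A; D] - r A` are the dimensions of `range B` modulo `range A` and
  -- of `ker A` modulo `ker D`, so both room conditions hold for `t = min .. - r A`.
  obtain ⟨g, hgB, hgD, hrank⟩ := exists_finrank_range_add_le_finrank_range_sub A.mulVecLin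
    (range B.mulVecLin) (ker D.mulVecLin)
    (t := min (fromCols A B).rank (fromRows A D).rank - A.rank) (by omega) (by omega)
  obtain ⟨X, rfl⟩ := exists_mul_mul_eq_of_range_le_of_ker_le B D g hgB hgD
  have hsub : A.mulVecLin - (B * X * D).mulVecLin = (A - B * X * D).mulVecLin := by
    ext
    simp
  change A.rank + _ ≤ _ at hrank
  rw [hsub] at hrank
  exact ⟨X, le_trans (by omega) hrank⟩

theorem exists_mul_mul_eq_one [Fintype m] [Fintype n] (N : Matrix m n K) :
    ∃ (u : Matrix (Fin N.rank) m K) (v : Matrix n (Fin N.rank) K), u * N * v = 1 := by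
  classical
  let R := range N.mulVecLin
  let e : R ≃ₗ[K] (Fin N.rank → K) := LinearEquiv.ofFinrankEq _ _ (by rw [finrank_fin_fun]; rfl)
  obtain ⟨π, hπ⟩ := R.subtype.exists_leftInverse_of_injective R.ker_subtype
  obtain ⟨s, hs⟩ := N.mulVecLin.rangeRestrict.exists_rightInverse_of_surjective
    N.mulVecLin.range_rangeRestrict
  have hsπ (y : R) : π (N *ᵥ s y) = y := by
    rw [show N *ᵥ s y = y from congr(($hs y : m → K))]
    exact congr($hπ y)
  refine ⟨toMatrix' (e.toLinearMap ∘ₗ π), toMatrix' (s ∘ₗ e.symm.toLinearMap), ?_⟩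
  apply toLin'.injective
  rw [toLin'_mul, toLin'_mul, toLin'_toMatrix', toLin'_toMatrix', toLin'_one]
  refine LinearMap.ext fun x => ?_
  simp [toLin'_apply', hsπ]

theorem le_rank_of_det_mul_mul_ne_zero {k : Type*} [Fintype k] [DecidableEq k] [Fintype m]
    [Fintype n] {N : Matrix m n K} {u : Matrix k m K} {v : Matrix n k K}
    (h : (u * N * v).det ≠ 0) : Fintype.card k ≤ N.rank :=
  calc Fintype.card k = (u * N * v).rank := (rank_of_det_ne_zero h).symm
    _ ≤ (N * v).rank := by rw [Matrix.mul_assoc]; exact rank_mul_le_right _ _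
    _ ≤ N.rank := rank_mul_le_left _ _

theorem finite_setOf_rank_add_smul_lt [Fintype m] [Fintype n] (M N : Matrix m n K) (t₀ : K) :
    {t : K | (M + t • N).rank < (M + t₀ • N).rank}.Finite := by
  obtain ⟨u, v, huv⟩ := exists_mul_mul_eq_one (M + t₀ • N)
  let P : Polynomial K := ((u * M * v).map Polynomial.C +
    (Polynomial.X : Polynomial K) • (u * N * v).map Polynomial.C).det
  have hP (t : K) : P.eval t = (u * (M + t • N) * v).det := by
    rw [← Polynomial.coe_evalRingHom, RingHom.map_det, Matrix.mul_add, Matrix.add_mul,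
      Matrix.mul_smul, Matrix.smul_mul]
    congr 1
    ext i j
    simp only [RingHom.mapMatrix_apply, map_apply, add_apply, smul_apply, smul_eq_mul,
      Polynomial.coe_evalRingHom, Polynomial.eval_add, Polynomial.eval_mul, Polynomial.eval_C,
      Polynomial.eval_X]
  have hP0 : P ≠ 0 := fun h => by
    simpa [huv] using (hP t₀).symm.trans congr(Polynomial.eval t₀ $h)
  refine (Polynomial.finite_setOfPred_isRoot hP0).subset fun t ht => ?_
  by_contra hroot
  have hle := le_rank_of_det_mul_mul_ne_zero (N := M + t • N) (u := u) (v := v) (hP t ▸ hroot)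
  rw [Fintype.card_fin] at hle
  exact ht.not_ge hle

theorem exists_le_rank_sub_mul_mul_and_le_rank_sub_mul_mul [Infinite K]
    {m₁ n₁ m₂ n₂ : Type*} [Fintype m₁] [Fintype n₁] [Fintype m₂] [Fintype n₂] [Fintype p]
    [Fintype q] (M₁ : Matrix m₁ n₁ K) (C₁ : Matrix m₁ p K) (E₁ : Matrix q n₁ K)
    (M₂ : Matrix m₂ n₂ K) (C₂ : Matrix m₂ p K) (E₂ : Matrix q n₂ K) (Y₁ Y₂ : Matrix p q K) :
    ∃ Y : Matrix p q K, (M₁ - C₁ * Y₁ * E₁).rank ≤ (M₁ - C₁ * Y * E₁).rank ∧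
      (M₂ - C₂ * Y₂ * E₂).rank ≤ (M₂ - C₂ * Y * E₂).rank := by
  -- On the line `Y₁ + t • (Y₂ - Y₁)` each rank falls below its value at `Y₁` (`t = 0`),
  -- resp. `Y₂` (`t = 1`), only for finitely many `t`.
  obtain ⟨t, ht⟩ :=
    ((finite_setOf_rank_add_smul_lt (M₁ - C₁ * Y₁ * E₁) (-(C₁ * (Y₂ - Y₁) * E₁)) 0).union
      (finite_setOf_rank_add_smul_lt (M₂ - C₂ * Y₁ * E₂) (-(C₂ * (Y₂ - Y₁) * E₂)) 1)).exists_notMem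
  simp only [← sub_mul_add_smul_mul] at ht
  simp only [Set.mem_union, Set.mem_ofPred_eq, not_or, not_lt, zero_smul, add_zero, one_smul,
    add_sub_cancel] at ht
  exact ⟨_, ht⟩

section TwoSided

variable {p₁ p₂ q₁ q₂ : Type*} [Fintype m] [Fintype n] [Fintype p₁] [Fintype p₂] [Fintype q₁]
  [Fintype q₂] (A : Matrix m n K) (B : Matrix m p₁ K) (C : Matrix m p₂ K) (D : Matrix q₁ n K)
  (E : Matrix q₂ n K)

theorem rank_fromCols_sub_mul_mul_le (Y : Matrix p₂ q₂ K) :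
    (fromCols (A - C * Y * E) B).rank ≤
      min (fromCols A (fromCols B C)).rank (fromBlocks A B E 0).rank := by
  rw [← fromCols_sub_mul_mul_fromCols_zero, ← rank_fromCols_fromCols,
    ← fromRows_fromCols_eq_fromBlocks]
  exact rank_sub_mul_mul_le_min _ _ _ _

theorem rank_fromRows_sub_mul_mul_le (Y : Matrix p₂ q₂ K) :
    (fromRows (A - C * Y * E) D).rank ≤
      min (fromBlocks A C D 0).rank (fromRows A (fromRows D E)).rank := by
  rw [← fromRows_sub_fromRows_zero_mul_mul, ← rank_fromRows_fromRows,
    ← fromCols_fromRows_eq_fromBlocks]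
  exact rank_sub_mul_mul_le_min _ _ _ _

theorem rank_sub_mul_mul_sub_mul_mul_le (X : Matrix p₁ q₁ K) (Y : Matrix p₂ q₂ K) :
    (A - B * X * D - C * Y * E).rank ≤
      min (min (fromRows A (fromRows D E)).rank (fromCols A (fromCols B C)).rank)
        (min (fromBlocks A B E 0).rank (fromBlocks A C D 0).rank) := by
  have h := rank_sub_mul_mul_le_min (A - C * Y * E) B X D
  have hcols := rank_fromCols_sub_mul_mul_le A B C E Y
  have hrows := rank_fromRows_sub_mul_mul_le A C D E Y
  rw [sub_right_comm]
  omega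

theorem exists_min_le_rank_sub_mul_mul_sub_mul_mul [Infinite K] :
    ∃ (X : Matrix p₁ q₁ K) (Y : Matrix p₂ q₂ K),
      min (min (fromRows A (fromRows D E)).rank (fromCols A (fromCols B C)).rank)
        (min (fromBlocks A B E 0).rank (fromBlocks A C D 0).rank) ≤
      (A - B * X * D - C * Y * E).rank := by
  let E' := fromCols E (0 : Matrix q₂ p₁ K)
  let C' := fromRows C (0 : Matrix q₁ p₂ K)
  obtain ⟨Y₁, h₁⟩ := exists_min_le_rank_sub_mul_mul (fromCols A B) C E'
  obtain ⟨Y₂, h₂⟩ := exists_min_le_rank_sub_mul_mul (fromRows A D) C' E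
  obtain ⟨Y, hY₁, hY₂⟩ :=
    exists_le_rank_sub_mul_mul_and_le_rank_sub_mul_mul (fromCols A B) C E' (fromRows A D) C' E Y₁ Y₂
  obtain ⟨X, hX⟩ := exists_min_le_rank_sub_mul_mul (A - C * Y * E) B D
  rw [rank_fromCols_fromCols, fromRows_fromCols_eq_fromBlocks] at h₁
  rw [rank_fromRows_fromRows, fromCols_fromRows_eq_fromBlocks] at h₂
  rw [fromCols_sub_mul_mul_fromCols_zero A B C Y E] at hY₁
  rw [fromRows_sub_fromRows_zero_mul_mul A D C Y E] at hY₂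
  refine ⟨X, Y, ?_⟩
  rw [sub_right_comm]
  omega

theorem isGreatest_rank_sub_mul_mul_sub_mul_mul [Infinite K] :
    IsGreatest {r : ℕ | ∃ (X : Matrix p₁ q₁ K) (Y : Matrix p₂ q₂ K),
        r = (A - B * X * D - C * Y * E).rank}
      (min (min (fromRows A (fromRows D E)).rank (fromCols A (fromCols B C)).rank)
        (min (fromBlocks A B E 0).rank (fromBlocks A C D 0).rank)) := by
  obtain ⟨X, Y, h⟩ := exists_min_le_rank_sub_mul_mul_sub_mul_mul A B C D E
  refine ⟨⟨X, Y, le_antisymm h (rank_sub_mul_mul_sub_mul_mul_le A B C D E X Y)⟩, ?_⟩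
  rintro r ⟨X, Y, rfl⟩
  exact rank_sub_mul_mul_sub_mul_mul_le A B C D E X Y

end TwoSided

end Matrix

open Matrix

/-- The maximal rank of `A - B*X*D - C*Y*E` over all `X`, `Y`. -/
theorem max_rank_p (m n p1 p2 q1 q2 : ℕ)
    (A : Matrix (Fin m) (Fin n) ℂ) (B : Matrix (Fin m) (Fin p1) ℂ)
    (C : Matrix (Fin m) (Fin p2) ℂ) (D : Matrix (Fin q1) (Fin n) ℂ)
    (E : Matrix (Fin q2) (Fin n) ℂ) :
    IsGreatest {r : ℕ | ∃ (X : Matrix (Fin p1) (Fin q1) ℂ) (Y : Matrix (Fin p2) (Fin q2) ℂ),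
        r = (A - B * X * D - C * Y * E).rank}
      (min (min (fromRows A (fromRows D E)).rank
                (fromCols A (fromCols B C)).rank)
           (min (fromBlocks A B E 0).rank
                (fromBlocks A C D 0).rank)) :=
  isGreatest_rank_sub_mul_mul_sub_mul_mul A B C D E
end

section
/- Let A ∈ ℂ^{m×n}, B ∈ ℂ^{m×k}, C ∈ ℂ^{l×n} be given, and for X ∈ ℂ^{k×n} and Y ∈ ℂ^{m×l} set f1(X,Y) = A − BX − YC. Then the maximum of r(f1(X,Y)) over all X ∈ ℂ^{k×n} and Y ∈ ℂ^{m×l} equals min{ m, n, r([A B; C 0]) }. -/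
/-!
The factorization `A - B X - Y C = [1, -Y] * [A B; C 0] * [1; -X]` bounds the rank by
`r([A B; C 0])`, and trivially by `m` and `n`. For the attainment, let `g : V → W`, `f : U → W`
be linear. As long as `rank g < min (dim V) (dim (range g ⊔ range f))`, there is `x ≠ 0` in
`ker g` and `u` with `f u ∉ range g`; adding `f ∘ h` for a rank-one `h` with `h x = u` raises the
rank by exactly one without changing `range g ⊔ range f`. So some `h` attains that minimum.
Applied to `[A; C] + [B; 0] X` it gives `rank [A + B X; C] = min n (r [A B; C 0])`, and then,
after transposing, to `(A + B X) + Y C`.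
-/

open Matrix Module Submodule LinearMap

section LinearMaps

variable {K U V W : Type*} [Field K] [AddCommGroup U] [Module K U] [AddCommGroup V] [Module K V]
  [AddCommGroup W] [Module K W]

theorem range_add_comp_sup_range (g : V →ₗ[K] W) (f : U →ₗ[K] W) (h : V →ₗ[K] U) :
    range (g + f ∘ₗ h) ⊔ range f = range g ⊔ range f := by
  refine le_antisymm (sup_le ?_ le_sup_right) (sup_le ?_ le_sup_right)
  · rintro _ ⟨y, rfl⟩
    exact add_mem_sup (mem_range_self g y) (mem_range_self f (h y))
  · rintro _ ⟨y, rfl⟩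
    simpa using sub_mem_sup (mem_range_self (g + f ∘ₗ h) y) (mem_range_self f (h y))

variable [FiniteDimensional K W]

theorem exists_finrank_range_add_comp_eq_succ {g : V →ₗ[K] W} {f : U →ₗ[K] W}
    (hg : ker g ≠ ⊥) (hf : ¬ range f ≤ range g) :
    ∃ h : V →ₗ[K] U, finrank K (range (g + f ∘ₗ h)) = finrank K (range g) + 1 := by
  obtain ⟨x, hx, hx0⟩ := (Submodule.ne_bot_iff _).mp hg
  obtain ⟨_, ⟨u, rfl⟩, hu⟩ := SetLike.not_le_iff_exists.mp hf
  obtain ⟨φ, hφ⟩ := Module.Projective.exists_dual_eq_one K hx0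
  rw [mem_ker] at hx
  refine ⟨φ.smulRight u, ?_⟩
  suffices range (g + f ∘ₗ φ.smulRight u) = range g ⊔ span K {f u} by
    rw [this, finrank_sup_span_singleton hu]
  refine le_antisymm ?_ (sup_le ?_ ?_)
  · rintro _ ⟨y, rfl⟩
    simpa using
      add_mem_sup (mem_range_self g y) (smul_mem _ (φ y) (mem_span_singleton_self (f u)))
  · rintro _ ⟨y, rfl⟩
    exact ⟨y - φ y • x, by simp [hx, hφ]⟩
  · rw [span_le, Set.singleton_subset_iff]
    exact ⟨x, by simp [hx, hφ]⟩

theorem exists_finrank_range_add_comp_eq_min [FiniteDimensional K V]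
    (g : V →ₗ[K] W) (f : U →ₗ[K] W) :
    ∃ h : V →ₗ[K] U, finrank K (range (g + f ∘ₗ h)) =
      min (finrank K V) (finrank K ↥(range g ⊔ range f)) := by
  induction hd : min (finrank K V) (finrank K ↥(range g ⊔ range f)) - finrank K (range g)
    generalizing g with
  | zero =>
    have := finrank_range_le g
    have := Submodule.finrank_mono (le_sup_left : range g ≤ range g ⊔ range f)
    exact ⟨0, by rw [LinearMap.comp_zero, add_zero]; omega⟩
  | succ d ih =>
    have hg : ker g ≠ ⊥ := fun hg ↦ by
      rw [finrank_range_of_inj (ker_eq_bot.mp hg)] at hd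
      omega
    have hf : ¬ range f ≤ range g := fun hf ↦ by
      rw [sup_eq_left.mpr hf] at hd
      omega
    obtain ⟨h₁, h₁_rank⟩ := exists_finrank_range_add_comp_eq_succ hg hf
    obtain ⟨h₂, h₂_rank⟩ := ih (g + f ∘ₗ h₁) (by rw [range_add_comp_sup_range]; omega)
    refine ⟨h₁ + h₂, ?_⟩
    rw [comp_add, ← add_assoc, h₂_rank, range_add_comp_sup_range]

end LinearMaps

section Matrices

theorem Matrix.fromRows_add_fromRows {R m₁ m₂ n : Type*} [Add R] (A₁ B₁ : Matrix m₁ n R)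
    (A₂ B₂ : Matrix m₂ n R) : fromRows A₁ A₂ + fromRows B₁ B₂ = fromRows (A₁ + B₁) (A₂ + B₂) := by
  ext (i | i) j <;> rfl

variable {K : Type*} [Field K] {m n p q : Type*} [Fintype n] [Fintype p] [Fintype q]

theorem Matrix.range_mulVecLin_fromCols_s5 (N : Matrix m n K) (B : Matrix m p K) :
    range (fromCols N B).mulVecLin = range N.mulVecLin ⊔ range B.mulVecLin := by
  have : (fromCols N B).mulVecLin =
      N.mulVecLin.coprod B.mulVecLin ∘ₗ
        (LinearEquiv.sumArrowLequivProdArrow n p K K).toLinearMap := by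
    ext v : 1
    simp only [mulVecLin_apply, fromCols_mulVec]
    rfl
  rw [this, range_comp_of_range_eq_top _ (LinearEquiv.range _), range_coprod]

theorem Matrix.exists_rank_add_mul_eq_min_fromCols [Fintype m] [DecidableEq n]
    (N : Matrix m n K) (B : Matrix m p K) :
    ∃ X : Matrix p n K, (N + B * X).rank = min (Fintype.card n) (fromCols N B).rank := by
  obtain ⟨h, hh⟩ := exists_finrank_range_add_comp_eq_min N.mulVecLin B.mulVecLin
  refine ⟨LinearMap.toMatrix' h, ?_⟩
  have hX : (LinearMap.toMatrix' h).mulVecLin = h := toLin'_toMatrix' h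
  rw [rank, rank, mulVecLin_add, mulVecLin_mul, hX, range_mulVecLin_fromCols_s5, hh,
    finrank_fintype_fun_eq_card]

theorem Matrix.exists_rank_add_mul_eq_min_fromRows [Fintype m] [DecidableEq m]
    (M : Matrix m n K) (C : Matrix q n K) :
    ∃ Y : Matrix m q K, (M + Y * C).rank = min (Fintype.card m) (fromRows M C).rank := by
  obtain ⟨Y, hY⟩ := exists_rank_add_mul_eq_min_fromCols Mᵀ Cᵀ
  refine ⟨Yᵀ, ?_⟩
  rw [← rank_transpose, transpose_add, transpose_mul, transpose_transpose, hY,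
    ← transpose_fromRows, rank_transpose]

end Matrices

theorem Matrix.rank_sub_mul_sub_mul_le_rank_fromBlocks {R : Type*} [CommRing R]
    [StrongRankCondition R] {m n p q : Type*} [Fintype m] [Fintype n] [Fintype p] [Fintype q]
    [DecidableEq m] [DecidableEq n]
    (A : Matrix m n R) (B : Matrix m p R) (C : Matrix q n R) (X : Matrix p n R)
    (Y : Matrix m q R) :
    (A - B * X - Y * C).rank ≤ (fromBlocks A B C 0).rank := by
  have : A - B * X - Y * C =
      fromCols (1 : Matrix m m R) (-Y) * (fromBlocks A B C 0 * fromRows (1 : Matrix n n R) (-X)) := by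
    rw [fromBlocks_mul_fromRows, fromCols_mul_fromRows]
    simp [sub_eq_add_neg]
  rw [this]
  exact (rank_mul_le_right _ _).trans (rank_mul_le_left _ _)

/-- Maximal rank of `A - B*X - Y*C` over all `X`, `Y`. -/
theorem max_rank_f1 (m n k l : ℕ)
    (A : Matrix (Fin m) (Fin n) ℂ) (B : Matrix (Fin m) (Fin k) ℂ)
    (C : Matrix (Fin l) (Fin n) ℂ) :
    IsGreatest {r : ℕ | ∃ (X : Matrix (Fin k) (Fin n) ℂ) (Y : Matrix (Fin m) (Fin l) ℂ),
        r = (A - B * X - Y * C).rank}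
      (min (min m n) (fromBlocks A B C 0).rank) := by
  refine ⟨?_, ?_⟩
  · obtain ⟨X, hX⟩ := exists_rank_add_mul_eq_min_fromCols (fromRows A C) (fromRows B 0)
    rw [fromCols_fromRows_eq_fromBlocks, fromRows_mul, Matrix.zero_mul, fromRows_add_fromRows,
      add_zero, Fintype.card_fin] at hX
    obtain ⟨Y, hY⟩ := exists_rank_add_mul_eq_min_fromRows (A + B * X) C
    refine ⟨-X, -Y, ?_⟩
    rw [Matrix.mul_neg, Matrix.neg_mul, sub_neg_eq_add, sub_neg_eq_add, hY, hX, Fintype.card_fin,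
      min_assoc]
  · rintro _ ⟨X, Y, rfl⟩
    exact le_min (le_min (rank_le_height _) (rank_le_width _))
      (rank_sub_mul_sub_mul_le_rank_fromBlocks A B C X Y)
end

section
/- Let A ∈ ℂ^{m×n}, B ∈ ℂ^{m×k}, C ∈ ℂ^{l×n} be given, and for X ∈ ℂ^{k×n} and Y ∈ ℂ^{m×l} set f1(X,Y) = A − BX − YC. Then the minimum of r(f1(X,Y)) over all X ∈ ℂ^{k×n} and Y ∈ ℂ^{m×l} equals r([A B; C 0]) − r(B) − r(C). -/
/-!
Multiplying by the invertible block matrices `[1 -Y; 0 1]` and `[1 0; -X 1]` shows that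
`[A - BX - YC, B; C, 0]` has the rank of `[A B; C 0]`, and subadditivity of rank along block rows
and block columns bounds it by `r(A - BX - YC) + r(B) + r(C)`.

For equality, take inner inverses `BGB = B`, `CHC = C` and the idempotents `E = 1 - BG`,
`F = 1 - HC`. With `X = GA` and `Y = EAH` one gets `A - BX - YC = EAF`: its columns are fixed by
`E`, which kills `B`, and its rows are fixed by `F`, which kills `C`. So the column spaces of the
first block row and the row spaces of the two block rows meet trivially, and the rank is additive.
-/

open Matrix

theorem LinearMap.exists_comp_comp_eq_self {K V W : Type*} [DivisionRing K] [AddCommGroup V]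
    [Module K V] [AddCommGroup W] [Module K W] (f : V →ₗ[K] W) :
    ∃ g : W →ₗ[K] V, f ∘ₗ g ∘ₗ f = f := by
  obtain ⟨s, hs⟩ := f.rangeRestrict.exists_rightInverse_of_surjective f.range_rangeRestrict
  obtain ⟨r, hr⟩ := f.range.subtype.exists_leftInverse_of_injective f.range.ker_subtype
  refine ⟨s ∘ₗ r, LinearMap.ext fun v => ?_⟩
  have hr' : r (f v) = f.rangeRestrict v := LinearMap.congr_fun hr (f.rangeRestrict v)
  have hs' : f (s (f.rangeRestrict v)) = f v := congrArg Subtype.val (LinearMap.congr_fun hs _)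
  simp only [LinearMap.comp_apply, hr', hs']

namespace Matrix

variable {R : Type*} {m m₁ m₂ n n₁ n₂ : Type*}

theorem exists_mul_mul_eq_self [Field R] [Fintype m] [DecidableEq m] [Fintype n] [DecidableEq n]
    (A : Matrix m n R) : ∃ G : Matrix n m R, A * G * A = A := by
  obtain ⟨g, hg⟩ := (toLin' A).exists_comp_comp_eq_self
  refine ⟨LinearMap.toMatrix' g, toLin'.injective ?_⟩
  rwa [toLin'_mul, toLin'_mul, toLin'_toMatrix', LinearMap.comp_assoc]

theorem range_mulVecLin_fromCols_s6 [CommSemiring R] [Fintype n₁] [Fintype n₂]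
    (A₁ : Matrix m n₁ R) (A₂ : Matrix m n₂ R) :
    (fromCols A₁ A₂).mulVecLin.range = A₁.mulVecLin.range ⊔ A₂.mulVecLin.range := by
  have hcol : (fromCols A₁ A₂).col = Sum.elim A₁.col A₂.col := by
    ext (j | j) <;> rfl
  rw [range_mulVecLin, range_mulVecLin, range_mulVecLin, ← Submodule.span_union, hcol,
    Set.Sum.elim_range]

theorem rank_fromBlocks_zero₂₂_sub_mul_sub_mul [CommRing R] [Fintype m₁] [Fintype m₂]
    [Fintype n₁] [Fintype n₂] [DecidableEq m₁] [DecidableEq m₂] [DecidableEq n₁] [DecidableEq n₂]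
    (A : Matrix m₁ n₁ R) (B : Matrix m₁ n₂ R) (C : Matrix m₂ n₁ R) (X : Matrix n₂ n₁ R)
    (Y : Matrix m₁ m₂ R) :
    (fromBlocks (A - B * X - Y * C) B C 0).rank = (fromBlocks A B C 0).rank := by
  have hfactor : fromBlocks (A - B * X - Y * C) B C 0
      = fromBlocks (1 : Matrix m₁ m₁ R) (-Y) 0 1 * fromBlocks A B C 0 *
        fromBlocks (1 : Matrix n₁ n₁ R) 0 (-X) 1 := by
    simp only [fromBlocks_multiply, Matrix.one_mul, Matrix.mul_one, Matrix.zero_mul,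
      Matrix.mul_zero, Matrix.neg_mul, Matrix.mul_neg, add_zero, zero_add, neg_zero]
    congr 1
    abel
  have hL : IsUnit (fromBlocks (1 : Matrix m₁ m₁ R) (-Y) 0 (1 : Matrix m₂ m₂ R)).det := by
    simp
  have hR : IsUnit (fromBlocks (1 : Matrix n₁ n₁ R) 0 (-X) (1 : Matrix n₂ n₂ R)).det := by
    simp
  rw [hfactor, rank_mul_eq_left_of_isUnit_det _ _ hR, rank_mul_eq_right_of_isUnit_det _ _ hL]

section Field

variable [Field R]

theorem rank_fromCols_le [Fintype n₁] [Fintype n₂] (A₁ : Matrix m n₁ R) (A₂ : Matrix m n₂ R) :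
    (fromCols A₁ A₂).rank ≤ A₁.rank + A₂.rank := by
  rw [rank, range_mulVecLin_fromCols_s6]
  exact Submodule.finrank_add_le_finrank_add_finrank _ _

theorem rank_fromCols_of_mul_eq [Fintype m] [Fintype n₁] [Fintype n₂] {A₁ : Matrix m n₁ R}
    {A₂ : Matrix m n₂ R} (E : Matrix m m R) (h₁ : E * A₁ = A₁) (h₂ : E * A₂ = 0) :
    (fromCols A₁ A₂).rank = A₁.rank + A₂.rank := by
  have hdisj : A₁.mulVecLin.range ⊓ A₂.mulVecLin.range = ⊥ := by
    refine (Submodule.eq_bot_iff _).2 fun x hx => ?_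
    obtain ⟨⟨v₁, rfl⟩, ⟨v₂, hv₂⟩⟩ := Submodule.mem_inf.1 hx
    rw [mulVecLin_apply, mulVecLin_apply] at hv₂
    calc A₁ *ᵥ v₁ = E *ᵥ (A₁ *ᵥ v₁) := by rw [mulVec_mulVec, h₁]
      _ = E *ᵥ (A₂ *ᵥ v₂) := by rw [hv₂]
      _ = 0 := by rw [mulVec_mulVec, h₂, zero_mulVec]
  have := Submodule.finrank_sup_add_finrank_inf_eq A₁.mulVecLin.range A₂.mulVecLin.range
  rw [hdisj, finrank_bot, add_zero] at this
  rw [rank, range_mulVecLin_fromCols_s6, this]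
  rfl

theorem rank_fromRows_le [Fintype m₁] [Fintype m₂] [Fintype n] (A₁ : Matrix m₁ n R)
    (A₂ : Matrix m₂ n R) : (fromRows A₁ A₂).rank ≤ A₁.rank + A₂.rank := by
  rw [← rank_transpose, transpose_fromRows, ← rank_transpose A₁, ← rank_transpose A₂]
  exact rank_fromCols_le A₁ᵀ A₂ᵀ

theorem rank_fromRows_of_mul_eq [Fintype m₁] [Fintype m₂] [Fintype n] {A₁ : Matrix m₁ n R}
    {A₂ : Matrix m₂ n R} (H : Matrix n n R) (h₁ : A₁ * H = A₁) (h₂ : A₂ * H = 0) :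
    (fromRows A₁ A₂).rank = A₁.rank + A₂.rank := by
  have h₁' : Hᵀ * A₁ᵀ = A₁ᵀ := by rw [← transpose_mul, h₁]
  have h₂' : Hᵀ * A₂ᵀ = 0 := by rw [← transpose_mul, h₂, transpose_zero]
  rw [← rank_transpose, transpose_fromRows, ← rank_transpose A₁, ← rank_transpose A₂]
  exact rank_fromCols_of_mul_eq Hᵀ h₁' h₂'

theorem rank_fromCols_zero [Fintype m] [Fintype n₁] [Fintype n₂] (A : Matrix m n₁ R) :
    (fromCols A (0 : Matrix m n₂ R)).rank = A.rank := by
  classical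
  rw [rank_fromCols_of_mul_eq 1 (Matrix.one_mul A) (Matrix.mul_zero 1), rank_zero, add_zero]

variable [Fintype m₁] [Fintype m₂] [Fintype n₁] [Fintype n₂]

theorem rank_fromBlocks_zero₂₂_le (A : Matrix m₁ n₁ R) (B : Matrix m₁ n₂ R)
    (C : Matrix m₂ n₁ R) : (fromBlocks A B C 0).rank ≤ A.rank + B.rank + C.rank := by
  rw [← fromRows_fromCols_eq_fromBlocks]
  calc _ ≤ (fromCols A B).rank + (fromCols C (0 : Matrix m₂ n₂ R)).rank := rank_fromRows_le _ _
    _ ≤ A.rank + B.rank + C.rank := by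
      rw [rank_fromCols_zero]
      gcongr
      exact rank_fromCols_le A B

theorem rank_fromBlocks_zero₂₂_of_mul_eq [DecidableEq n₂] {A : Matrix m₁ n₁ R}
    {B : Matrix m₁ n₂ R} {C : Matrix m₂ n₁ R} (E : Matrix m₁ m₁ R) (F : Matrix n₁ n₁ R)
    (hEA : E * A = A) (hEB : E * B = 0) (hAF : A * F = A) (hCF : C * F = 0) :
    (fromBlocks A B C 0).rank = A.rank + B.rank + C.rank := by
  rw [← fromRows_fromCols_eq_fromBlocks,
    rank_fromRows_of_mul_eq (fromBlocks F 0 0 1) (by simp [fromCols_mul_fromBlocks, hAF])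
      (by simp [fromCols_mul_fromBlocks, hCF]),
    rank_fromCols_of_mul_eq E hEA hEB, rank_fromCols_zero]

theorem exists_rank_fromBlocks_zero₂₂_eq_add [DecidableEq m₁] [DecidableEq n₁] [DecidableEq m₂]
    [DecidableEq n₂] (A : Matrix m₁ n₁ R) (B : Matrix m₁ n₂ R) (C : Matrix m₂ n₁ R) :
    ∃ (X : Matrix n₂ n₁ R) (Y : Matrix m₁ m₂ R),
      (fromBlocks A B C 0).rank = (A - B * X - Y * C).rank + B.rank + C.rank := by
  obtain ⟨G, hG⟩ := exists_mul_mul_eq_self B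
  obtain ⟨H, hH⟩ := exists_mul_mul_eq_self C
  set E := 1 - B * G
  set F := 1 - H * C
  have hE : IsIdempotentElem E := IsIdempotentElem.one_sub <| by
    rw [IsIdempotentElem, ← Matrix.mul_assoc, hG]
  have hF : IsIdempotentElem F := IsIdempotentElem.one_sub <| by
    rw [IsIdempotentElem, Matrix.mul_assoc, ← Matrix.mul_assoc C, hH]
  have hEB : E * B = 0 := by rw [Matrix.sub_mul, Matrix.one_mul, hG, sub_self]
  have hCF : C * F = 0 := by rw [Matrix.mul_sub, Matrix.mul_one, ← Matrix.mul_assoc, hH, sub_self]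
  have hZ : A - B * (G * A) - E * A * H * C = E * A * F := by
    simp only [E, F, Matrix.sub_mul, Matrix.mul_sub, Matrix.one_mul, Matrix.mul_one,
      Matrix.mul_assoc]
  refine ⟨G * A, E * A * H, ?_⟩
  rw [← rank_fromBlocks_zero₂₂_sub_mul_sub_mul A B C (G * A) (E * A * H), hZ]
  exact rank_fromBlocks_zero₂₂_of_mul_eq E F (by rw [← Matrix.mul_assoc, ← Matrix.mul_assoc, hE.eq])
    hEB (by rw [Matrix.mul_assoc, hF.eq]) hCF

end Field

end Matrix

/-- Minimal rank of `A - B*X - Y*C` over all `X`, `Y`. -/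
theorem min_rank_f1 (m n k l : ℕ)
    (A : Matrix (Fin m) (Fin n) ℂ) (B : Matrix (Fin m) (Fin k) ℂ)
    (C : Matrix (Fin l) (Fin n) ℂ) :
    IsLeast {r : ℤ | ∃ (X : Matrix (Fin k) (Fin n) ℂ) (Y : Matrix (Fin m) (Fin l) ℂ),
        r = ((A - B * X - Y * C).rank : ℤ)}
      (((fromBlocks A B C 0).rank : ℤ) - (B.rank : ℤ) - (C.rank : ℤ)) := by
  constructor
  · obtain ⟨X, Y, h⟩ := exists_rank_fromBlocks_zero₂₂_eq_add A B C
    exact ⟨X, Y, by rw [h]; push_cast; ring⟩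
  · rintro _ ⟨X, Y, rfl⟩
    have h := rank_fromBlocks_zero₂₂_le (A - B * X - Y * C) B C
    rw [rank_fromBlocks_zero₂₂_sub_mul_sub_mul] at h
    omega
end

section
/- Let A ∈ ℂ^{m×n} and, for i = 1,2,3,4, let Bi ∈ ℂ^{m×k_i} and Ci ∈ ℂ^{l_i×n} be given with R(Bi) ⊆ R(B2) for i ∈ {1,3,4} and R(Cj*) ⊆ R(C1*) for j ∈ {2,3,4}. For Xi ∈ ℂ^{k_i×l_i} (i = 1,2,3,4) set f3(X1,X2,X3,X4) = A − B1·X1·C1 − B2·X2·C2 − B3·X3·C3 − B4·X4·C4. Then the maximum of r(f3(X1,X2,X3,X4)) over all such X1, X2, X3, X4 equals min{ r([A B2]), r([A; C1]), r([A B1; C2 0; C3 0; C4 0]), r([A B1 B3 B4; C2 0 0 0]), r([A B1 B3; C2 0 0; C4 0 0]), r([A B1 B4; C2 0 0; C3 0 0]) }. -/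
/-!
For one term, `A - B X C` factors through both `[A B]` and `[A; C]`, so its rank is at most the
smaller of their ranks. Conversely, while `r A` is below both, there are `x` with `B x ∉ R(A)` and
`z ∈ ker A` with `C z ≠ 0`; for `v` with `vᵀ C z = 1`, the correction `A + B (x vᵀ) C` has rank
`r A + 1` and the same bordered ranks, so induction attains the bound.

For two terms, `X₂` is chosen so that `[A - B₂X₂C₂, B₁]` and `[A - B₂X₂C₂; C₁]` reach their
one-term maxima simultaneously, and then `X₁` by the one-term result. Such an `X₂` lies on the
line through the two separate maximisers: along a line a nonsingular minor stays nonsingular off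
the finitely many roots of its determinant. When `R(B₁) ⊆ R(B₂)` and `R(C₂ᴴ) ⊆ R(C₁ᴴ)`, choosing
`X₁` first and then `X₂` gives the maximum `min (r [A B₂]) (r [A; C₁]) (r [A B₁; C₂ 0])`.

For `f₃`, fix `X₃, X₄` and apply the latter to `A - B₃X₃C₃ - B₄X₄C₄`: the first two ranks do not
see `X₃, X₄`, while `[A - B₃X₃C₃ - B₄X₄C₄, B₁; C₂, 0]` is `[A B₁; C₂ 0]` minus two terms in
`X₃, X₄`. Its maximal rank is the general two-term formula, whose four bordered matrices are the
last four matrices of the statement up to a permutation of rows and columns.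
-/

open Matrix Filter

namespace Matrix

variable {α K : Type*} [Field K] {m n k l m' n' k' l' k₁ l₁ k₂ l₂ : Type*}

section BlockIdentities

variable [Ring α] [Fintype k] [Fintype l]

theorem fromCols_sub_mul_mul (A : Matrix m n α) (B : Matrix m k α) (X : Matrix k l α)
    (C : Matrix l n α) (B' : Matrix m n' α) :
    fromCols (A - B * X * C) B' = fromCols A B' - B * X * fromCols C 0 := by
  rw [mul_fromCols, Matrix.mul_zero]
  ext i (j | j) <;> simp

theorem fromRows_sub_mul_mul (A : Matrix m n α) (B : Matrix m k α) (X : Matrix k l α)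
    (C : Matrix l n α) (C' : Matrix m' n α) :
    fromRows (A - B * X * C) C' = fromRows A C' - fromRows B 0 * X * C := by
  rw [fromRows_mul, fromRows_mul, Matrix.zero_mul, Matrix.zero_mul]
  ext (i | i) j <;> simp

theorem fromBlocks_sub_mul_mul (A : Matrix m n α) (B : Matrix m k α) (X : Matrix k l α)
    (C : Matrix l n α) (B' : Matrix m n' α) (C' : Matrix m' n α) (D : Matrix m' n' α) :
    fromBlocks (A - B * X * C) B' C' D
      = fromBlocks A B' C' D - fromRows B 0 * X * fromCols C 0 := by
  rw [fromRows_mul, Matrix.zero_mul, fromRows_mul_fromCols]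
  ext (i | i) (j | j) <;> simp

end BlockIdentities

theorem exists_eq_mul_of_range_mulVecLin_le {R : Type*} [CommSemiring R] [Fintype k]
    [Fintype k'] [DecidableEq k] {B : Matrix m k R} {B' : Matrix m k' R}
    (h : LinearMap.range B.mulVecLin ≤ LinearMap.range B'.mulVecLin) :
    ∃ P : Matrix k' k R, B = B' * P := by
  choose p hp using fun j : k => h ⟨Pi.single j 1, rfl⟩
  refine ⟨(of p)ᵀ, ?_⟩
  ext i j
  have hij := congrFun (hp j) i
  simp only [mulVecLin_apply, mulVec_single_one, col_apply] at hij
  simp [← hij, mulVec, dotProduct, mul_apply]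

theorem exists_eq_mul_of_range_conjTranspose_mulVecLin_le {R : Type*} [CommSemiring R]
    [StarRing R] [Fintype l] [Fintype l'] [DecidableEq l] {C : Matrix l n R}
    {C' : Matrix l' n R} (h : LinearMap.range Cᴴ.mulVecLin ≤ LinearMap.range C'ᴴ.mulVecLin) :
    ∃ T : Matrix l l' R, C = T * C' := by
  obtain ⟨P, hP⟩ := exists_eq_mul_of_range_mulVecLin_le h
  exact ⟨Pᴴ, by rw [← conjTranspose_conjTranspose C, hP, conjTranspose_mul,
    conjTranspose_conjTranspose]⟩

section Rank

variable [Fintype n] [Fintype n'] [Fintype k]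

theorem rank_fromCols_fromCols_fromBlocks_zero [Fintype k'] (A : Matrix m n K)
    (B : Matrix m n' K) (C : Matrix m' n K) (B₁ : Matrix m k K) (B₂ : Matrix m k' K) :
    (fromCols (fromCols (fromBlocks A B C 0) (fromRows B₁ 0)) (fromRows B₂ 0)).rank
      = (fromBlocks A (fromCols B (fromCols B₁ B₂)) C 0).rank := by
  rw [← rank_submatrix _ (Equiv.refl _)
    ((Equiv.sumAssoc (n ⊕ n') k k').trans (Equiv.sumAssoc n n' (k ⊕ k')))]
  congr 1
  ext (i | i) (((j | j) | j) | j) <;> simp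

theorem rank_fromRows_fromRows_fromBlocks_zero (A : Matrix m n K) (B : Matrix m n' K)
    (C : Matrix m' n K) (C₁ : Matrix l n K) (C₂ : Matrix l' n K) :
    (fromRows (fromRows (fromBlocks A B C 0) (fromCols C₁ 0)) (fromCols C₂ 0)).rank
      = (fromBlocks A B (fromRows C (fromRows C₁ C₂)) 0).rank := by
  rw [← rank_submatrix _ ((Equiv.sumAssoc (m ⊕ m') l l').trans (Equiv.sumAssoc m m' (l ⊕ l')))
    (Equiv.refl _)]
  congr 1
  ext (((i | i) | i) | i) (j | j) <;> simp

theorem rank_fromBlocks_fromBlocks_zero (A : Matrix m n K) (B : Matrix m n' K)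
    (C : Matrix m' n K) (B₁ : Matrix m k K) (C₁ : Matrix l n K) :
    (fromBlocks (fromBlocks A B C 0) (fromRows B₁ 0) (fromCols C₁ 0) 0).rank
      = (fromBlocks A (fromCols B B₁) (fromRows C C₁) 0).rank := by
  rw [← rank_submatrix _ (Equiv.sumAssoc m m' l) (Equiv.sumAssoc n n' k)]
  congr 1
  ext ((i | i) | i) ((j | j) | j) <;> simp

variable [Fintype l] [Fintype k₁] [Fintype l₁]

theorem rank_sub_mul_mul_le [Fintype m] [DecidableEq m] [DecidableEq n] (A : Matrix m n K)
    (B : Matrix m k K) (X : Matrix k l K) (C : Matrix l n K) :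
    (A - B * X * C).rank ≤ min (fromCols A B).rank (fromRows A C).rank := by
  refine le_min ?_ ?_
  · have h : A - B * X * C = fromCols A B * fromRows (1 : Matrix n n K) (-(X * C)) := by
      rw [fromCols_mul_fromRows]; simp [Matrix.mul_assoc, sub_eq_add_neg]
    exact h ▸ rank_mul_le_left _ _
  · have h : A - B * X * C = fromCols (1 : Matrix m m K) (-(B * X)) * fromRows A C := by
      rw [fromCols_mul_fromRows]; simp [sub_eq_add_neg]
    exact h ▸ rank_mul_le_right _ _

theorem rank_fromCols_add_mul [DecidableEq n] [DecidableEq k] (A : Matrix m n K)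
    (B : Matrix m k K) (W : Matrix k n K) :
    (fromCols (A + B * W) B).rank = (fromCols A B).rank := by
  have h : fromCols (A + B * W) B
      = fromCols A B * (fromBlocks 1 0 W 1 : Matrix (n ⊕ k) (n ⊕ k) K) := by
    simp [fromCols_mul_fromBlocks]
  rw [h, rank_mul_eq_left_of_isUnit_det _ _ (by simp)]

theorem rank_fromRows_add_mul [Fintype m] [DecidableEq m] [DecidableEq l] (A : Matrix m n K)
    (C : Matrix l n K) (W : Matrix m l K) :
    (fromRows (A + W * C) C).rank = (fromRows A C).rank := by
  have h : fromRows (A + W * C) C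
      = (fromBlocks 1 W 0 1 : Matrix (m ⊕ l) (m ⊕ l) K) * fromRows A C := by
    simp [fromBlocks_mul_fromRows]
  rw [h, rank_mul_eq_right_of_isUnit_det _ _ (by simp)]

theorem rank_fromCols_sub_mul_mul_of_eq_mul [DecidableEq n] [DecidableEq k] {A : Matrix m n K}
    {B₁ : Matrix m k₁ K} {B : Matrix m k K} {P : Matrix k k₁ K} (hB : B₁ = B * P)
    (X : Matrix k₁ l₁ K) (C : Matrix l₁ n K) :
    (fromCols (A - B₁ * X * C) B).rank = (fromCols A B).rank := by
  rw [hB, ← rank_fromCols_add_mul A B (-(P * X * C))]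
  simp [Matrix.mul_assoc, sub_eq_add_neg]

theorem rank_fromRows_sub_mul_mul_of_eq_mul [Fintype m] [DecidableEq m] [DecidableEq l]
    {A : Matrix m n K} {C₁ : Matrix l₁ n K} {C : Matrix l n K} {T : Matrix l₁ l K} (hC : C₁ = T * C)
    (B : Matrix m k₁ K) (X : Matrix k₁ l₁ K) :
    (fromRows (A - B * X * C₁) C).rank = (fromRows A C).rank := by
  rw [hC, ← rank_fromRows_add_mul A C (-(B * X * T))]
  simp [Matrix.mul_assoc, sub_eq_add_neg]

theorem rank_fromRows_fromRows_of_eq_mul [Fintype m] [DecidableEq m] [DecidableEq l]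
    {A : Matrix m n K} {C₁ : Matrix l' n K} {C : Matrix l n K} {T : Matrix l' l K}
    (hC : C₁ = T * C) :
    (fromRows (fromRows A C₁) C).rank = (fromRows A C).rank := by
  refine le_antisymm ?_ ?_
  · have h : fromRows (fromRows A C₁) C
        = (fromRows (fromRows (fromCols 1 0) (fromCols 0 T)) (fromCols 0 1) :
            Matrix ((m ⊕ l') ⊕ l) (m ⊕ l) K) * fromRows A C := by
      simp only [fromRows_mul, fromCols_mul_fromRows]
      simp [hC]
    exact h ▸ rank_mul_le_right _ _
  · have h : fromRows A C
        = (fromRows (fromRows A C₁) C).submatrix (Sum.elim (Sum.inl ∘ Sum.inl) Sum.inr) id := by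
      ext (i | i) j <;> rfl
    exact h ▸ rank_submatrix_le _ _ _

end Rank

section RankOne

variable [Fintype n]

theorem rank_add_vecMulVec [Fintype m] {A : Matrix m n K} {u : m → K} {w z : n → K}
    (hu : u ∉ LinearMap.range A.mulVecLin) (hz : A *ᵥ z = 0) (hwz : w ⬝ᵥ z = 1) :
    (A + vecMulVec u w).rank = A.rank + 1 := by
  have hmulVec (v : n → K) : (A + vecMulVec u w) *ᵥ v = A *ᵥ v + (w ⬝ᵥ v) • u := by
    rw [add_mulVec, vecMulVec_mulVec, op_smul_eq_smul]
  have hrange : LinearMap.range (A + vecMulVec u w).mulVecLin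
      = LinearMap.range A.mulVecLin ⊔ Submodule.span K {u} := by
    refine le_antisymm ?_ (sup_le ?_ ?_)
    · rintro _ ⟨v, rfl⟩
      rw [mulVecLin_apply, hmulVec]
      exact Submodule.add_mem_sup ⟨v, rfl⟩
        (Submodule.smul_mem _ _ (Submodule.mem_span_singleton_self u))
    · rintro _ ⟨v, rfl⟩
      refine ⟨v - (w ⬝ᵥ v) • z, ?_⟩
      rw [mulVecLin_apply, mulVecLin_apply, hmulVec]
      simp [mulVec_sub, mulVec_smul, hz, dotProduct_sub, dotProduct_smul, hwz]
    · rw [Submodule.span_singleton_le_iff_mem]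
      exact ⟨z, by rw [mulVecLin_apply, hmulVec, hz, hwz, zero_add, one_smul]⟩
  rw [rank, hrange, Submodule.finrank_sup_span_singleton hu, rank]

theorem exists_mulVec_notMem_range_of_rank_lt_rank_fromCols [Fintype k] [DecidableEq n]
    [DecidableEq k] {A : Matrix m n K} {B : Matrix m k K} (h : A.rank < (fromCols A B).rank) :
    ∃ x, B *ᵥ x ∉ LinearMap.range A.mulVecLin := by
  by_contra! hB
  obtain ⟨P, rfl⟩ := exists_eq_mul_of_range_mulVecLin_le (B := B) (B' := A)
    (by rintro _ ⟨x, rfl⟩; exact hB x)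
  have hfactor : fromCols A (A * P) = A * fromCols 1 P := by simp
  exact h.not_ge (hfactor ▸ rank_mul_le_left _ _)

theorem exists_mulVec_eq_zero_and_ne_zero_of_rank_lt_rank_fromRows
    {A : Matrix m n K} {C : Matrix l n K} (h : A.rank < (fromRows A C).rank) :
    ∃ z, A *ᵥ z = 0 ∧ C *ᵥ z ≠ 0 := by
  by_contra! hC
  have hker : LinearMap.ker (fromRows A C).mulVecLin = LinearMap.ker A.mulVecLin := by
    ext z
    simp only [LinearMap.mem_ker, mulVecLin_apply, fromRows_mulVec]
    exact ⟨fun hz => funext fun i => congrFun hz (.inl i),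
      fun hz => by rw [hz, hC z hz, Sum.elim_zero_zero]⟩
  have h₁ := LinearMap.finrank_range_add_finrank_ker (fromRows A C).mulVecLin
  have h₂ := LinearMap.finrank_range_add_finrank_ker A.mulVecLin
  rw [hker] at h₁
  exact h.ne (by unfold rank; omega)

theorem exists_rank_sub_mul_mul_eq [Fintype m] [Fintype k] [Fintype l] [DecidableEq m]
    [DecidableEq n] [DecidableEq k] [DecidableEq l] (A : Matrix m n K) (B : Matrix m k K)
    (C : Matrix l n K) :
    ∃ X : Matrix k l K, (A - B * X * C).rank = min (fromCols A B).rank (fromRows A C).rank := by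
  have hA := rank_sub_mul_mul_le A B 0 C
  simp only [Matrix.mul_zero, Matrix.zero_mul, sub_zero] at hA
  induction hd : min (fromCols A B).rank (fromRows A C).rank - A.rank generalizing A with
  | zero => exact ⟨0, by rw [Matrix.mul_zero, Matrix.zero_mul, sub_zero]; omega⟩
  | succ d ih =>
    obtain ⟨x, hx⟩ := exists_mulVec_notMem_range_of_rank_lt_rank_fromCols (A := A) (B := B)
      (by omega)
    obtain ⟨z, hAz, hCz⟩ := exists_mulVec_eq_zero_and_ne_zero_of_rank_lt_rank_fromRows
      (A := A) (C := C) (by omega)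
    obtain ⟨b, hb⟩ := Function.ne_iff.1 hCz
    set v : l → K := Pi.single b ((C *ᵥ z) b)⁻¹
    have hvz : (v ᵥ* C) ⬝ᵥ z = 1 := by
      rw [← dotProduct_mulVec, single_dotProduct, inv_mul_cancel₀ hb]
    set A' : Matrix m n K := A + B * vecMulVec x v * C with hA'
    have hrank : A'.rank = A.rank + 1 := by
      rw [hA', mul_vecMulVec, vecMulVec_mul]; exact rank_add_vecMulVec hx hAz hvz
    have hcols : (fromCols A' B).rank = (fromCols A B).rank := by
      rw [hA', Matrix.mul_assoc]; exact rank_fromCols_add_mul _ _ _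
    have hrows : (fromRows A' C).rank = (fromRows A C).rank := rank_fromRows_add_mul _ _ _
    obtain ⟨X, hX⟩ := ih A' (by rw [hcols, hrows]; omega) (by rw [hcols, hrows]; omega)
    refine ⟨X - vecMulVec x v, ?_⟩
    rw [← hcols, ← hrows, ← hX, hA', Matrix.mul_sub, Matrix.sub_mul, sub_sub_eq_add_sub]

end RankOne

section Semicontinuity

variable [Fintype m] [Fintype n]

theorem exists_rank_submatrix_id_eq {r : ℕ} (A : Matrix m n K) (hr : A.rank = r) :
    ∃ g : Fin r → n, (A.submatrix id g).rank = r := by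
  obtain ⟨κ, a, -, hspan, hli⟩ := exists_linearIndependent' K A.col
  have : Fintype κ := have := hli.finite; Fintype.ofFinite κ
  have hcols : (A.submatrix id a).rank = r := by
    rw [← hr, rank_eq_finrank_span_cols, rank_eq_finrank_span_cols, ← hspan]
    rfl
  have hcard : Fintype.card κ = r := by
    rw [← hcols, rank_eq_finrank_span_cols, ← finrank_span_eq_card hli]; rfl
  let e : Fin r ≃ κ := (Fintype.equivFinOfCardEq hcard).symm
  exact ⟨a ∘ e, (rank_submatrix (A.submatrix id a) (Equiv.refl m) e).trans hcols⟩

theorem exists_isUnit_det_submatrix (A : Matrix m n K) :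
    ∃ (f : Fin A.rank → m) (g : Fin A.rank → n), IsUnit (A.submatrix f g).det := by
  obtain ⟨g, hg⟩ := exists_rank_submatrix_id_eq A rfl
  obtain ⟨f, hf⟩ := exists_rank_submatrix_id_eq (A.submatrix id g)ᵀ (by rw [rank_transpose, hg])
  refine ⟨f, g, ?_⟩
  rw [← isUnit_iff_isUnit_det, ← linearIndependent_rows_iff_isUnit,
    linearIndependent_iff_card_eq_finrank_span, Fintype.card_fin, Set.finrank,
    ← rank_eq_finrank_span_row]
  exact hf.symm.trans (rank_transpose _)

theorem eventually_rank_le_rank_add_smul (U V : Matrix m n K) (t₀ : K) :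
    ∀ᶠ t : K in cofinite, (U + t₀ • V).rank ≤ (U + t • V).rank := by
  obtain ⟨f, g, hdet⟩ := exists_isUnit_det_submatrix (U + t₀ • V)
  set p : Polynomial K := ((U.submatrix f g).map Polynomial.C
    + (Polynomial.X : Polynomial K) • (V.submatrix f g).map Polynomial.C).det
  have hp (t : K) : p.eval t = ((U + t • V).submatrix f g).det := by
    rw [← Polynomial.coe_evalRingHom, RingHom.map_det]
    congr 1
    ext i j
    simp only [RingHom.mapMatrix_apply, Polynomial.coe_evalRingHom, map_apply, add_apply,
      submatrix_apply, smul_apply, smul_eq_mul, Polynomial.eval_add, Polynomial.eval_mul,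
      Polynomial.eval_C, Polynomial.eval_X]
  have hp0 : p ≠ 0 := fun h => hdet.ne_zero (by rw [← hp, h, Polynomial.eval_zero])
  filter_upwards [(Polynomial.finite_setOfPred_isRoot hp0).eventually_cofinite_notMem] with t ht
  calc (U + t₀ • V).rank = ((U + t • V).submatrix f g).rank := by
        rw [rank_of_isUnit _ ((isUnit_iff_isUnit_det _).2 (hp t ▸ isUnit_iff_ne_zero.2 ht)),
          Fintype.card_fin]
    _ ≤ (U + t • V).rank := rank_submatrix_le _ _ _

end Semicontinuity

theorem sub_mul_add_smul_sub_mul [Fintype k] [Fintype l] (A : Matrix m n K) (B : Matrix m k K)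
    (C : Matrix l n K) (X Y : Matrix k l K) (t : K) :
    A - B * (X + t • (Y - X)) * C = A - B * X * C + t • (A - B * Y * C - (A - B * X * C)) := by
  simp only [Matrix.mul_add, Matrix.add_mul, Matrix.mul_smul, Matrix.smul_mul, Matrix.mul_sub,
    Matrix.sub_mul]
  module

theorem exists_rank_sub_mul_mul_eq_and_rank_sub_mul_mul_eq [Infinite K] [Fintype m] [Fintype n]
    [Fintype k] [Fintype l] [Fintype m'] [Fintype n'] [DecidableEq m] [DecidableEq n]
    [DecidableEq m'] [DecidableEq n'] [DecidableEq k] [DecidableEq l] (A : Matrix m n K)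
    (B : Matrix m k K) (C : Matrix l n K) (A' : Matrix m' n' K) (B' : Matrix m' k K)
    (C' : Matrix l n' K) :
    ∃ X : Matrix k l K,
      (A - B * X * C).rank = min (fromCols A B).rank (fromRows A C).rank ∧
      (A' - B' * X * C').rank = min (fromCols A' B').rank (fromRows A' C').rank := by
  obtain ⟨X₀, h₀⟩ := exists_rank_sub_mul_mul_eq A B C
  obtain ⟨X₁, h₁⟩ := exists_rank_sub_mul_mul_eq A' B' C'
  obtain ⟨t, ht₀, ht₁⟩ := ((eventually_rank_le_rank_add_smul (A - B * X₀ * C)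
    (A - B * X₁ * C - (A - B * X₀ * C)) 0).and (eventually_rank_le_rank_add_smul
    (A' - B' * X₀ * C') (A' - B' * X₁ * C' - (A' - B' * X₀ * C')) 1)).exists
  rw [zero_smul, add_zero, h₀] at ht₀
  rw [one_smul, add_sub_cancel, h₁] at ht₁
  refine ⟨X₀ + t • (X₁ - X₀), le_antisymm (rank_sub_mul_mul_le _ _ _ _) ?_,
    le_antisymm (rank_sub_mul_mul_le _ _ _ _) ?_⟩
  · rwa [sub_mul_add_smul_sub_mul]
  · rwa [sub_mul_add_smul_sub_mul]

section TwoTerms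

variable [Fintype m] [Fintype n] [Fintype k₁] [Fintype l₁] [Fintype k₂] [Fintype l₂]
  [DecidableEq m] [DecidableEq n] (A : Matrix m n K) (B₁ : Matrix m k₁ K) (C₁ : Matrix l₁ n K)
  (B₂ : Matrix m k₂ K) (C₂ : Matrix l₂ n K)

theorem rank_sub_mul_mul_sub_mul_mul_le_s9 [DecidableEq k₁] [DecidableEq l₁] (X₁ : Matrix k₁ l₁ K)
    (X₂ : Matrix k₂ l₂ K) :
    (A - B₁ * X₁ * C₁ - B₂ * X₂ * C₂).rank ≤
      min (min (fromCols (fromCols A B₁) B₂).rank (fromRows (fromRows A C₁) C₂).rank)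
        (min (fromBlocks A B₁ C₂ 0).rank (fromBlocks A B₂ C₁ 0).rank) := by
  have h := rank_sub_mul_mul_le (A - B₂ * X₂ * C₂) B₁ X₁ C₁
  have hcols := rank_sub_mul_mul_le (fromCols A B₁) B₂ X₂ (fromCols C₂ 0)
  have hrows := rank_sub_mul_mul_le (fromRows A C₁) (fromRows B₂ 0) X₂ C₂
  rw [← fromCols_sub_mul_mul, fromRows_fromCols_eq_fromBlocks] at hcols
  rw [← fromRows_sub_mul_mul, fromCols_fromRows_eq_fromBlocks] at hrows
  rw [sub_right_comm]
  omega

theorem exists_rank_sub_mul_mul_sub_mul_mul_eq [Infinite K] [DecidableEq k₁] [DecidableEq l₁]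
    [DecidableEq k₂] [DecidableEq l₂] :
    ∃ (X₁ : Matrix k₁ l₁ K) (X₂ : Matrix k₂ l₂ K), (A - B₁ * X₁ * C₁ - B₂ * X₂ * C₂).rank =
      min (min (fromCols (fromCols A B₁) B₂).rank (fromRows (fromRows A C₁) C₂).rank)
        (min (fromBlocks A B₁ C₂ 0).rank (fromBlocks A B₂ C₁ 0).rank) := by
  obtain ⟨X₂, hcols, hrows⟩ := exists_rank_sub_mul_mul_eq_and_rank_sub_mul_mul_eq
    (fromCols A B₁) B₂ (fromCols C₂ 0) (fromRows A C₁) (fromRows B₂ 0) C₂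
  obtain ⟨X₁, h⟩ := exists_rank_sub_mul_mul_eq (A - B₂ * X₂ * C₂) B₁ C₁
  rw [← fromCols_sub_mul_mul, fromRows_fromCols_eq_fromBlocks] at hcols
  rw [← fromRows_sub_mul_mul, fromCols_fromRows_eq_fromBlocks] at hrows
  refine ⟨X₁, X₂, ?_⟩
  rw [sub_right_comm, h, hcols, hrows]
  omega

variable [DecidableEq k₂] [DecidableEq l₁] [DecidableEq l₂] {A B₁ C₁ B₂ C₂}
  {P : Matrix k₂ k₁ K} {T : Matrix l₂ l₁ K}

theorem rank_sub_mul_mul_sub_mul_mul_le_of_eq_mul (hB : B₁ = B₂ * P) (hC : C₂ = T * C₁)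
    (X₁ : Matrix k₁ l₁ K) (X₂ : Matrix k₂ l₂ K) :
    (A - B₁ * X₁ * C₁ - B₂ * X₂ * C₂).rank ≤
      min (min (fromCols A B₂).rank (fromRows A C₁).rank) (fromBlocks A B₁ C₂ 0).rank := by
  have h := rank_sub_mul_mul_le (A - B₁ * X₁ * C₁) B₂ X₂ C₂
  have hrows := rank_sub_mul_mul_le (fromRows A C₂) (fromRows B₁ 0) X₁ C₁
  rw [rank_fromCols_sub_mul_mul_of_eq_mul hB] at h
  rw [← fromRows_sub_mul_mul, fromCols_fromRows_eq_fromBlocks,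
    rank_fromRows_fromRows_of_eq_mul hC] at hrows
  omega

theorem exists_rank_sub_mul_mul_sub_mul_mul_eq_of_eq_mul [DecidableEq k₁]
    (hB : B₁ = B₂ * P) (hC : C₂ = T * C₁) :
    ∃ (X₁ : Matrix k₁ l₁ K) (X₂ : Matrix k₂ l₂ K), (A - B₁ * X₁ * C₁ - B₂ * X₂ * C₂).rank =
      min (min (fromCols A B₂).rank (fromRows A C₁).rank) (fromBlocks A B₁ C₂ 0).rank := by
  obtain ⟨X₁, hrows⟩ := exists_rank_sub_mul_mul_eq (fromRows A C₂) (fromRows B₁ 0) C₁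
  obtain ⟨X₂, h⟩ := exists_rank_sub_mul_mul_eq (A - B₁ * X₁ * C₁) B₂ C₂
  rw [← fromRows_sub_mul_mul, fromCols_fromRows_eq_fromBlocks,
    rank_fromRows_fromRows_of_eq_mul hC] at hrows
  rw [rank_fromCols_sub_mul_mul_of_eq_mul hB, hrows] at h
  exact ⟨X₁, X₂, by rw [h]; omega⟩

end TwoTerms

section FourTerms

variable {k₃ l₃ k₄ l₄ : Type*} [Fintype m] [Fintype n] [Fintype k₁] [Fintype l₁] [Fintype k₂]
  [Fintype l₂] [Fintype k₃] [Fintype l₃] [Fintype k₄] [Fintype l₄] [DecidableEq m]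
  [DecidableEq n] [DecidableEq k₂] [DecidableEq l₁] [DecidableEq l₂]
  (A : Matrix m n K) {B₁ : Matrix m k₁ K} {C₁ : Matrix l₁ n K} {B₂ : Matrix m k₂ K}
  {C₂ : Matrix l₂ n K} {B₃ : Matrix m k₃ K} {C₃ : Matrix l₃ n K} {B₄ : Matrix m k₄ K}
  {C₄ : Matrix l₄ n K} {P : Matrix k₂ k₁ K} {Q : Matrix k₂ k₃ K} {S : Matrix k₂ k₄ K}
  {T : Matrix l₂ l₁ K} {U : Matrix l₃ l₁ K} {V : Matrix l₄ l₁ K}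

theorem rank_sub_four_mul_mul_le_of_eq_mul (hB₁ : B₁ = B₂ * P) (hB₃ : B₃ = B₂ * Q)
    (hB₄ : B₄ = B₂ * S) (hC₂ : C₂ = T * C₁) (hC₃ : C₃ = U * C₁) (hC₄ : C₄ = V * C₁)
    (X₁ : Matrix k₁ l₁ K) (X₂ : Matrix k₂ l₂ K) (X₃ : Matrix k₃ l₃ K) (X₄ : Matrix k₄ l₄ K) :
    (A - B₁ * X₁ * C₁ - B₂ * X₂ * C₂ - B₃ * X₃ * C₃ - B₄ * X₄ * C₄).rank ≤
      min (min (fromCols A B₂).rank (fromRows A C₁).rank)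
        (fromBlocks A B₁ C₂ 0 - fromRows B₃ 0 * X₃ * fromCols C₃ 0
          - fromRows B₄ 0 * X₄ * fromCols C₄ 0).rank := by
  have h := rank_sub_mul_mul_sub_mul_mul_le_of_eq_mul (A := A - B₃ * X₃ * C₃ - B₄ * X₄ * C₄)
    hB₁ hC₂ X₁ X₂
  rw [rank_fromCols_sub_mul_mul_of_eq_mul hB₄, rank_fromCols_sub_mul_mul_of_eq_mul hB₃,
    rank_fromRows_sub_mul_mul_of_eq_mul hC₄, rank_fromRows_sub_mul_mul_of_eq_mul hC₃,
    fromBlocks_sub_mul_mul, fromBlocks_sub_mul_mul] at h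
  convert h using 2
  abel

theorem exists_rank_sub_four_mul_mul_eq_of_eq_mul [DecidableEq k₁] (hB₁ : B₁ = B₂ * P)
    (hB₃ : B₃ = B₂ * Q) (hB₄ : B₄ = B₂ * S) (hC₂ : C₂ = T * C₁) (hC₃ : C₃ = U * C₁)
    (hC₄ : C₄ = V * C₁) (X₃ : Matrix k₃ l₃ K) (X₄ : Matrix k₄ l₄ K) :
    ∃ (X₁ : Matrix k₁ l₁ K) (X₂ : Matrix k₂ l₂ K),
      (A - B₁ * X₁ * C₁ - B₂ * X₂ * C₂ - B₃ * X₃ * C₃ - B₄ * X₄ * C₄).rank =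
        min (min (fromCols A B₂).rank (fromRows A C₁).rank)
          (fromBlocks A B₁ C₂ 0 - fromRows B₃ 0 * X₃ * fromCols C₃ 0
            - fromRows B₄ 0 * X₄ * fromCols C₄ 0).rank := by
  obtain ⟨X₁, X₂, h⟩ := exists_rank_sub_mul_mul_sub_mul_mul_eq_of_eq_mul
    (A := A - B₃ * X₃ * C₃ - B₄ * X₄ * C₄) hB₁ hC₂
  rw [rank_fromCols_sub_mul_mul_of_eq_mul hB₄, rank_fromCols_sub_mul_mul_of_eq_mul hB₃,
    rank_fromRows_sub_mul_mul_of_eq_mul hC₄, rank_fromRows_sub_mul_mul_of_eq_mul hC₃,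
    fromBlocks_sub_mul_mul, fromBlocks_sub_mul_mul] at h
  refine ⟨X₁, X₂, Eq.trans ?_ h⟩
  congr 1
  abel

end FourTerms

end Matrix

/-- Maximal rank of `A - B1*X1*C1 - B2*X2*C2 - B3*X3*C3 - B4*X4*C4` under range inclusions. -/
theorem max_rank_f3 (m n k1 l1 k2 l2 k3 l3 k4 l4 : ℕ)
    (A : Matrix (Fin m) (Fin n) ℂ)
    (B1 : Matrix (Fin m) (Fin k1) ℂ) (C1 : Matrix (Fin l1) (Fin n) ℂ)
    (B2 : Matrix (Fin m) (Fin k2) ℂ) (C2 : Matrix (Fin l2) (Fin n) ℂ)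
    (B3 : Matrix (Fin m) (Fin k3) ℂ) (C3 : Matrix (Fin l3) (Fin n) ℂ)
    (B4 : Matrix (Fin m) (Fin k4) ℂ) (C4 : Matrix (Fin l4) (Fin n) ℂ)
    (hB1 : LinearMap.range B1.mulVecLin ≤ LinearMap.range B2.mulVecLin)
    (hB3 : LinearMap.range B3.mulVecLin ≤ LinearMap.range B2.mulVecLin)
    (hB4 : LinearMap.range B4.mulVecLin ≤ LinearMap.range B2.mulVecLin)
    (hC2 : LinearMap.range C2ᴴ.mulVecLin ≤ LinearMap.range C1ᴴ.mulVecLin)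
    (hC3 : LinearMap.range C3ᴴ.mulVecLin ≤ LinearMap.range C1ᴴ.mulVecLin)
    (hC4 : LinearMap.range C4ᴴ.mulVecLin ≤ LinearMap.range C1ᴴ.mulVecLin) :
    IsGreatest {r : ℕ | ∃ (X1 : Matrix (Fin k1) (Fin l1) ℂ) (X2 : Matrix (Fin k2) (Fin l2) ℂ)
        (X3 : Matrix (Fin k3) (Fin l3) ℂ) (X4 : Matrix (Fin k4) (Fin l4) ℂ),
        r = (A - B1 * X1 * C1 - B2 * X2 * C2 - B3 * X3 * C3 - B4 * X4 * C4).rank}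
      (min (min (fromCols A B2).rank (fromRows A C1).rank)
        (min (min (fromBlocks A B1 (fromRows C2 (fromRows C3 C4)) 0).rank
                  (fromBlocks A (fromCols B1 (fromCols B3 B4)) C2 0).rank)
             (min (fromBlocks A (fromCols B1 B3) (fromRows C2 C4) 0).rank
                  (fromBlocks A (fromCols B1 B4) (fromRows C2 C3) 0).rank))) := by
  obtain ⟨P, hP⟩ := exists_eq_mul_of_range_mulVecLin_le hB1
  obtain ⟨Q, hQ⟩ := exists_eq_mul_of_range_mulVecLin_le hB3
  obtain ⟨S, hS⟩ := exists_eq_mul_of_range_mulVecLin_le hB4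
  obtain ⟨T, hT⟩ := exists_eq_mul_of_range_conjTranspose_mulVecLin_le hC2
  obtain ⟨U, hU⟩ := exists_eq_mul_of_range_conjTranspose_mulVecLin_le hC3
  obtain ⟨V, hV⟩ := exists_eq_mul_of_range_conjTranspose_mulVecLin_le hC4
  rw [← rank_fromRows_fromRows_fromBlocks_zero, ← rank_fromCols_fromCols_fromBlocks_zero,
    ← rank_fromBlocks_fromBlocks_zero, ← rank_fromBlocks_fromBlocks_zero]
  constructor
  · obtain ⟨X3, X4, h34⟩ := exists_rank_sub_mul_mul_sub_mul_mul_eq (fromBlocks A B1 C2 0)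
      (fromRows B3 0) (fromCols C3 0) (fromRows B4 0) (fromCols C4 0)
    obtain ⟨X1, X2, h⟩ := exists_rank_sub_four_mul_mul_eq_of_eq_mul A hP hQ hS hT hU hV X3 X4
    exact ⟨X1, X2, X3, X4, by rw [h, h34]; omega⟩
  · rintro _ ⟨X1, X2, X3, X4, rfl⟩
    have h := rank_sub_four_mul_mul_le_of_eq_mul A hP hQ hS hT hU hV X1 X2 X3 X4
    have h34 := rank_sub_mul_mul_sub_mul_mul_le_s9 (fromBlocks A B1 C2 0) (fromRows B3 0)
      (fromCols C3 0) (fromRows B4 0) (fromCols C4 0) X3 X4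
    omega
end

section
/- Let m2, m3, m4, n2, n3, n4 be natural numbers and let A3 ∈ ℂ^{m2×n4} and A7 ∈ ℂ^{m4×n2} be fixed. For matrices Z1 ∈ ℂ^{m2×n2}, Z2 ∈ ℂ^{m2×n3}, Z3 ∈ ℂ^{m3×n2}, Z4 ∈ ℂ^{m3×n3}, Z5 ∈ ℂ^{m3×n4}, Z6 ∈ ℂ^{m4×n3}, Z7 ∈ ℂ^{m4×n4}, let Ω(Z1,…,Z7) denote the 3×3 block matrix [Z1 Z2 A3; Z3 Z4 Z5; A7 Z6 Z7]. Then the minimum of r(Ω(Z1,…,Z7)) over all choices of Z1, …, Z7 equals max{ r(A3), r(A7) }. -/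
/-!
The blocks `A3` and `A7` are submatrices of `Ω`, so `r(Ω) ≥ max {r(A3), r(A7)} =: r`.
Conversely, factor `A3 = B3 * C3` and `A7 = B7 * C7` through `Kʳ`; choosing `Z1 = B3 * C7`,
`Z7 = B7 * C3` and all other free blocks zero makes `Ω = [B3; 0; B7] * [C7 0 C3]`,
a product through `Kʳ`, so this choice has rank at most `r`.
-/

open Matrix

namespace Matrix

variable {K : Type*} [Field K]

theorem exists_eq_mul_of_rank_le {m n : Type*} [Fintype n] {r : ℕ}
    (A : Matrix m n K) (h : A.rank ≤ r) :
    ∃ (B : Matrix m (Fin r) K) (C : Matrix (Fin r) n K), A = B * C := by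
  classical
  let V := LinearMap.range A.mulVecLin
  have hV : Module.finrank K V ≤ Module.finrank K (Fin r → K) := by
    rw [Module.finrank_fin_fun]
    exact h
  obtain ⟨j, hj⟩ := finrank_le_iff_exists_linearMap.mp hV
  obtain ⟨p, hp⟩ := j.exists_leftInverse_of_injective (LinearMap.ker_eq_bot.mpr hj)
  refine ⟨LinearMap.toMatrix' (V.subtype ∘ₗ p),
    LinearMap.toMatrix' (j ∘ₗ A.mulVecLin.rangeRestrict), ?_⟩
  rw [← LinearMap.toMatrix'_comp, LinearMap.comp_assoc, ← LinearMap.comp_assoc _ j p, hp,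
    LinearMap.id_comp, LinearMap.rangeRestrict, LinearMap.subtype_comp_codRestrict,
    ← Matrix.toLin'_apply', LinearMap.toMatrix'_toLin']

theorem rank_mul_le_card_inner {m n o : Type*} [Fintype n] [Fintype o]
    (B : Matrix m n K) (C : Matrix n o K) : (B * C).rank ≤ Fintype.card n :=
  (rank_mul_le_left B C).trans (rank_le_card_width B)

variable {m₂ m₃ m₄ n₂ n₃ n₄ : Type*} [Fintype n₂] [Fintype n₃] [Fintype n₄]

theorem max_rank_le_rank_fromBlocks_corners (A₃ : Matrix m₂ n₄ K) (A₇ : Matrix m₄ n₂ K)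
    (Z₁ : Matrix m₂ n₂ K) (Z₂ : Matrix m₂ n₃ K) (Z₃ : Matrix m₃ n₂ K) (Z₄ : Matrix m₃ n₃ K)
    (Z₅ : Matrix m₃ n₄ K) (Z₆ : Matrix m₄ n₃ K) (Z₇ : Matrix m₄ n₄ K) :
    max A₃.rank A₇.rank ≤
      (fromBlocks Z₁ (fromCols Z₂ A₃) (fromRows Z₃ A₇) (fromBlocks Z₄ Z₅ Z₆ Z₇)).rank := by
  set Ω := fromBlocks Z₁ (fromCols Z₂ A₃) (fromRows Z₃ A₇) (fromBlocks Z₄ Z₅ Z₆ Z₇)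
  have hA₃ : A₃ = Ω.submatrix Sum.inl (Sum.inr ∘ Sum.inr) := by
    ext i j
    simp [Ω]
  have hA₇ : A₇ = Ω.submatrix (Sum.inr ∘ Sum.inr) Sum.inl := by
    ext i j
    simp [Ω]
  exact max_le (hA₃ ▸ rank_submatrix_le Ω _ _) (hA₇ ▸ rank_submatrix_le Ω _ _)

theorem exists_rank_fromBlocks_corners_le {r : ℕ} (A₃ : Matrix m₂ n₄ K) (A₇ : Matrix m₄ n₂ K)
    (h₃ : A₃.rank ≤ r) (h₇ : A₇.rank ≤ r) :
    ∃ (Z₁ : Matrix m₂ n₂ K) (Z₇ : Matrix m₄ n₄ K),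
      (fromBlocks Z₁ (fromCols (0 : Matrix m₂ n₃ K) A₃) (fromRows (0 : Matrix m₃ n₂ K) A₇)
        (fromBlocks 0 0 0 Z₇)).rank ≤ r := by
  obtain ⟨B₃, C₃, rfl⟩ := exists_eq_mul_of_rank_le A₃ h₃
  obtain ⟨B₇, C₇, rfl⟩ := exists_eq_mul_of_rank_le A₇ h₇
  refine ⟨B₃ * C₇, B₇ * C₃, ?_⟩
  have hfactor : fromBlocks (B₃ * C₇) (fromCols 0 (B₃ * C₃)) (fromRows 0 (B₇ * C₇))
      (fromBlocks (0 : Matrix m₃ n₃ K) 0 0 (B₇ * C₃)) =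
      fromRows B₃ (fromRows (0 : Matrix m₃ (Fin r) K) B₇) * fromCols C₇ (fromCols 0 C₃) := by
    ext (i | i | i) (j | j | j) <;> simp [mul_apply]
  rw [hfactor]
  exact (rank_mul_le_card_inner _ _).trans_eq (Fintype.card_fin r)

end Matrix

/-- Minimal rank of the block matrix `[Z1 Z2 A3; Z3 Z4 Z5; A7 Z6 Z7]`. -/
theorem min_rank_Omega (m2 m3 m4 n2 n3 n4 : ℕ)
    (A3 : Matrix (Fin m2) (Fin n4) ℂ) (A7 : Matrix (Fin m4) (Fin n2) ℂ) :
    IsLeast {r : ℕ | ∃ (Z1 : Matrix (Fin m2) (Fin n2) ℂ) (Z2 : Matrix (Fin m2) (Fin n3) ℂ)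
        (Z3 : Matrix (Fin m3) (Fin n2) ℂ) (Z4 : Matrix (Fin m3) (Fin n3) ℂ)
        (Z5 : Matrix (Fin m3) (Fin n4) ℂ) (Z6 : Matrix (Fin m4) (Fin n3) ℂ)
        (Z7 : Matrix (Fin m4) (Fin n4) ℂ),
        r = (fromBlocks Z1 (fromCols Z2 A3) (fromRows Z3 A7)
              (fromBlocks Z4 Z5 Z6 Z7)).rank}
      (max A3.rank A7.rank) := by
  refine ⟨?_, ?_⟩
  · obtain ⟨Z1, Z7, hle⟩ := exists_rank_fromBlocks_corners_le (m₃ := Fin m3) (n₃ := Fin n3)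
      A3 A7 (le_max_left _ _) (le_max_right _ _)
    exact ⟨Z1, 0, 0, 0, 0, 0, Z7,
      le_antisymm (max_rank_le_rank_fromBlocks_corners A3 A7 _ _ _ _ _ _ _) hle⟩
  · rintro _ ⟨Z1, Z2, Z3, Z4, Z5, Z6, Z7, rfl⟩
    exact max_rank_le_rank_fromBlocks_corners A3 A7 Z1 Z2 Z3 Z4 Z5 Z6 Z7
end

section
/- Let a, b, c, d, e, f be natural numbers and let A1 ∈ ℂ^{a×d}, A2 ∈ ℂ^{a×e}, A4 ∈ ℂ^{b×d} be fixed. For matrices Z3 ∈ ℂ^{a×f}, Z5 ∈ ℂ^{b×e}, Z6 ∈ ℂ^{b×f}, Z7 ∈ ℂ^{c×d}, Z8 ∈ ℂ^{c×e}, Z9 ∈ ℂ^{c×f}, consider the 3×3 block matrix M(Z3,Z5,Z6,Z7,Z8,Z9) = [A1 A2 Z3; A4 Z5 Z6; Z7 Z8 Z9]. Then the minimum of r(M(Z3,Z5,Z6,Z7,Z8,Z9)) over all choices of Z3, Z5, Z6, Z7, Z8, Z9 equals r([A1 A2]) + r([A1; A4]) − r(A1). -/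
open Matrix Module

/-! The lower bound is the Frobenius rank inequality `r(PM) + r(MQ) ≤ r(M) + r(PMQ)`, with `P` and
`Q` selecting the first block row and the first block column of `M`.
For the upper bound, split `A2 = A1 X + W` with the columns of `W` in a complement of the column
space of `A1`, so that `r(A1) + r(W) ≤ r([A1 A2])`. With `Z5 = A4 X` and all other blocks zero,
`M = [A1; A4] [I X] + [W; 0] [0 I]` up to zero padding, so `r(M) ≤ r([A1; A4]) + r(W)`. -/

namespace Submodule

variable {K V W : Type*} [DivisionRing K] [AddCommGroup V] [Module K V] [FiniteDimensional K V]
  [AddCommGroup W] [Module K W]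

theorem finrank_map_add_finrank_inf_ker (p : Submodule K V) (f : V →ₗ[K] W) :
    finrank K (p.map f) + finrank K ↥(p ⊓ LinearMap.ker f) = finrank K p := by
  have h := LinearMap.finrank_range_add_finrank_ker (f.domRestrict p)
  rwa [LinearMap.range_domRestrict, LinearMap.ker_domRestrict, ← finrank_map_subtype_eq,
    map_comap_subtype] at h

theorem finrank_add_finrank_map_le_of_le {p q : Submodule K V} (hpq : p ≤ q) (f : V →ₗ[K] W) :
    finrank K p + finrank K (q.map f) ≤ finrank K q + finrank K (p.map f) := by
  have hp := p.finrank_map_add_finrank_inf_ker f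
  have hq := q.finrank_map_add_finrank_inf_ker f
  have hker := finrank_mono (inf_le_inf_right (LinearMap.ker f) hpq)
  omega

end Submodule

theorem LinearMap.finrank_range_comp_add_finrank_range_comp_le {K U V W X : Type*} [DivisionRing K]
    [AddCommGroup U] [Module K U] [AddCommGroup V] [Module K V] [AddCommGroup W] [Module K W]
    [FiniteDimensional K W] [AddCommGroup X] [Module K X]
    (f : U →ₗ[K] V) (g : V →ₗ[K] W) (h : W →ₗ[K] X) :
    finrank K (range (h ∘ₗ g)) + finrank K (range (g ∘ₗ f)) ≤
      finrank K (range g) + finrank K (range (h ∘ₗ g ∘ₗ f)) := by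
  rw [range_comp g h, range_comp (g ∘ₗ f) h, add_comm]
  exact Submodule.finrank_add_finrank_map_le_of_le (range_comp_le_range f g) h

namespace Matrix

variable {K : Type*} [Field K] {l m n o p m₁ m₂ n₁ n₂ : Type*}

theorem rank_mul_add_rank_mul_le [Fintype m] [Fintype n] [Fintype o]
    (A : Matrix l m K) (B : Matrix m n K) (C : Matrix n o K) :
    (A * B).rank + (B * C).rank ≤ B.rank + (A * B * C).rank := by
  rw [rank, rank, rank, rank, Matrix.mul_assoc, mulVecLin_mul, mulVecLin_mul, mulVecLin_mul,
    mulVecLin_mul]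
  exact LinearMap.finrank_range_comp_add_finrank_range_comp_le _ _ _

theorem rank_fromCols_add_rank_fromRows_le [Fintype m₁] [Fintype m₂] [Fintype n₁] [Fintype n₂]
    (A : Matrix m₁ n₁ K) (B : Matrix m₁ n₂ K) (C : Matrix m₂ n₁ K) (D : Matrix m₂ n₂ K) :
    (fromCols A B).rank + (fromRows A C).rank ≤ (fromBlocks A B C D).rank + A.rank := by
  classical
  have := rank_mul_add_rank_mul_le (fromCols (1 : Matrix m₁ m₁ K) (0 : Matrix m₁ m₂ K))
    (fromBlocks A B C D) (fromRows (1 : Matrix n₁ n₁ K) (0 : Matrix n₂ n₁ K))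
  simpa [fromCols_mul_fromBlocks, fromBlocks_mul_fromRows, fromCols_mul_fromRows] using this

theorem rank_fromCols_le_rank_fromCols_fromCols [Fintype n₁] [Fintype n₂] [Fintype p]
    (A : Matrix m n₁ K) (B : Matrix m n₂ K) (C : Matrix m p K) :
    (fromCols A B).rank ≤ (fromCols A (fromCols B C)).rank := by
  have : fromCols A B = (fromCols A (fromCols B C)).submatrix id (Sum.map id Sum.inl) := by
    ext i (j | j) <;> rfl
  rw [this]
  exact rank_submatrix_le _ _ _

theorem rank_fromRows_le_rank_fromRows_fromRows [Fintype n]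
    (A : Matrix m₁ n K) (B : Matrix m₂ n K) (C : Matrix l n K) :
    (fromRows A B).rank ≤ (fromRows A (fromRows B C)).rank := by
  have : fromRows A B = (fromRows A (fromRows B C)).submatrix (Sum.map id Sum.inl) id := by
    ext (i | i) j <;> rfl
  rw [this]
  exact rank_submatrix_le _ _ _

theorem rank_add_le [Fintype n] (A B : Matrix m n K) : (A + B).rank ≤ A.rank + B.rank := by
  rw [rank, mulVecLin_add]
  exact (Submodule.finrank_mono (LinearMap.range_add_le _ _)).trans
    (Submodule.finrank_add_le_finrank_add_finrank _ _)

theorem rank_fromRows_zero_le [Fintype m₁] [Fintype n] (A : Matrix m₁ n K) :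
    (fromRows A (0 : Matrix m₂ n K)).rank ≤ A.rank := by
  classical
  have : fromRows A (0 : Matrix m₂ n K) =
      fromRows (1 : Matrix m₁ m₁ K) (0 : Matrix m₂ m₁ K) * A := by
    rw [fromRows_mul, Matrix.one_mul, Matrix.zero_mul]
  rw [this]
  exact rank_mul_le_right _ _

theorem rank_fromCols_zero_le [Fintype n₁] [Fintype n₂] (A : Matrix m n₁ K) :
    (fromCols A (0 : Matrix m n₂ K)).rank ≤ A.rank := by
  classical
  have : fromCols A (0 : Matrix m n₂ K) =
      A * fromCols (1 : Matrix n₁ n₁ K) (0 : Matrix n₁ n₂ K) := by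
    rw [mul_fromCols, Matrix.mul_one, Matrix.mul_zero]
  rw [this]
  exact rank_mul_le_left _ _

theorem range_mulVecLin_mul_le [Fintype m] [Fintype n] (M : Matrix l m K) (N : Matrix m n K) :
    LinearMap.range (M * N).mulVecLin ≤ LinearMap.range M.mulVecLin := by
  rw [mulVecLin_mul]
  exact LinearMap.range_comp_le_range _ _

theorem exists_rank_add_rank_sub_mul_le [Fintype m] [Fintype n] [Fintype p]
    (A : Matrix m n K) (B : Matrix m p K) :
    ∃ X : Matrix n p K, A.rank + (B - A * X).rank ≤ (fromCols A B).rank := by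
  classical
  have hA : LinearMap.range A.mulVecLin ≤ LinearMap.range (fromCols A B).mulVecLin := by
    simpa [fromCols_mul_fromRows] using
      range_mulVecLin_mul_le (fromCols A B) (fromRows (1 : Matrix n n K) 0)
  set S := LinearMap.range A.mulVecLin
  obtain ⟨U, hU⟩ := Submodule.exists_isCompl S
  obtain ⟨s, hs⟩ := A.mulVecLin.rangeRestrict.exists_rightInverse_of_surjective
    A.mulVecLin.range_rangeRestrict
  have hAs : ∀ z : S, A *ᵥ s z = z := fun z => congrArg Subtype.val (LinearMap.congr_fun hs z)
  -- `A * X` projects the columns of `B` onto the column space of `A` along `U`.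
  set X := LinearMap.toMatrix' (s ∘ₗ S.projectionOnto U hU) * B
  refine ⟨X, ?_⟩
  have hWU : LinearMap.range (B - A * X).mulVecLin ≤ U := by
    rintro _ ⟨v, rfl⟩
    have hAX : A *ᵥ (X *ᵥ v) = S.projection U hU (B *ᵥ v) := by
      rw [← mulVec_mulVec, LinearMap.toMatrix'_mulVec]
      exact hAs _
    simpa [sub_mulVec, ← mulVec_mulVec, hAX] using Submodule.sub_projection_mem hU (B *ᵥ v)
  have hW : LinearMap.range (B - A * X).mulVecLin ≤ LinearMap.range (fromCols A B).mulVecLin := by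
    simpa [fromCols_mul_fromRows, neg_add_eq_sub] using
      range_mulVecLin_mul_le (fromCols A B) (fromRows (-X) 1)
  have hinf : S ⊓ LinearMap.range (B - A * X).mulVecLin = ⊥ :=
    eq_bot_iff.2 ((inf_le_inf_left S hWU).trans hU.disjoint.le_bot)
  have hsum := Submodule.finrank_sup_add_finrank_inf_eq S (LinearMap.range (B - A * X).mulVecLin)
  rw [hinf, finrank_bot, add_zero] at hsum
  exact hsum ▸ Submodule.finrank_mono (sup_le hA hW)

theorem exists_rank_fromBlocks_add_rank_le [Fintype m₁] [Fintype n₁] [Fintype n₂]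
    (A : Matrix m₁ n₁ K) (B : Matrix m₁ n₂ K) (C : Matrix m₂ n₁ K) :
    ∃ D : Matrix m₂ n₂ K,
      (fromBlocks A B C D).rank + A.rank ≤ (fromCols A B).rank + (fromRows A C).rank := by
  classical
  obtain ⟨X, hX⟩ := exists_rank_add_rank_sub_mul_le A B
  refine ⟨C * X, ?_⟩
  have hsplit : fromBlocks A B C (C * X) =
      fromRows A C * fromCols 1 X +
        fromRows (B - A * X) (0 : Matrix m₂ n₂ K) * fromCols (0 : Matrix n₂ n₁ K) 1 := by
    rw [fromRows_mul_fromCols, fromRows_mul_fromCols, fromBlocks_add]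
    simp
  have hrank : (fromBlocks A B C (C * X)).rank ≤ (fromRows A C).rank + (B - A * X).rank :=
    hsplit ▸ (rank_add_le _ _).trans (add_le_add (rank_mul_le_left _ _)
      ((rank_mul_le_left _ _).trans (rank_fromRows_zero_le _)))
  omega

theorem rank_fromBlocks_fromCols_zero_fromRows_zero_le {m₃ n₃ : Type*}
    [Fintype m₁] [Fintype m₂] [Fintype n₁] [Fintype n₂] [Fintype n₃]
    (A : Matrix m₁ n₁ K) (B : Matrix m₁ n₂ K) (C : Matrix m₂ n₁ K) (D : Matrix m₂ n₂ K) :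
    (fromBlocks A (fromCols B (0 : Matrix m₁ n₃ K)) (fromRows C (0 : Matrix m₃ n₁ K))
      (fromBlocks D 0 0 0)).rank ≤ (fromBlocks A B C D).rank := by
  have : fromBlocks A (fromCols B (0 : Matrix m₁ n₃ K)) (fromRows C (0 : Matrix m₃ n₁ K))
      (fromBlocks D 0 0 0) = (fromRows (fromCols (fromBlocks A B C D) 0) 0).submatrix
        (Equiv.sumAssoc m₁ m₂ m₃).symm (Equiv.sumAssoc n₁ n₂ n₃).symm := by
    ext (i | i | i) (j | j | j) <;> rfl
  rw [this, rank_submatrix]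
  exact (rank_fromRows_zero_le _).trans (rank_fromCols_zero_le _)

end Matrix

/-- Minimal rank of the block matrix `[A1 A2 Z3; A4 Z5 Z6; Z7 Z8 Z9]`. -/
theorem min_rank_partial_block (a b c d e f : ℕ)
    (A1 : Matrix (Fin a) (Fin d) ℂ) (A2 : Matrix (Fin a) (Fin e) ℂ)
    (A4 : Matrix (Fin b) (Fin d) ℂ) :
    IsLeast {r : ℤ | ∃ (Z3 : Matrix (Fin a) (Fin f) ℂ) (Z5 : Matrix (Fin b) (Fin e) ℂ)
        (Z6 : Matrix (Fin b) (Fin f) ℂ) (Z7 : Matrix (Fin c) (Fin d) ℂ)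
        (Z8 : Matrix (Fin c) (Fin e) ℂ) (Z9 : Matrix (Fin c) (Fin f) ℂ),
        r = ((fromBlocks A1 (fromCols A2 Z3) (fromRows A4 Z7)
              (fromBlocks Z5 Z6 Z8 Z9)).rank : ℤ)}
      (((fromCols A1 A2).rank : ℤ) + ((fromRows A1 A4).rank : ℤ) - (A1.rank : ℤ)) := by
  have lower (Z3 : Matrix (Fin a) (Fin f) ℂ) (Z5 : Matrix (Fin b) (Fin e) ℂ)
      (Z6 : Matrix (Fin b) (Fin f) ℂ) (Z7 : Matrix (Fin c) (Fin d) ℂ)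
      (Z8 : Matrix (Fin c) (Fin e) ℂ) (Z9 : Matrix (Fin c) (Fin f) ℂ) :
      (fromCols A1 A2).rank + (fromRows A1 A4).rank ≤
        (fromBlocks A1 (fromCols A2 Z3) (fromRows A4 Z7) (fromBlocks Z5 Z6 Z8 Z9)).rank +
          A1.rank :=
    (add_le_add (rank_fromCols_le_rank_fromCols_fromCols A1 A2 Z3)
      (rank_fromRows_le_rank_fromRows_fromRows A1 A4 Z7)).trans
        (rank_fromCols_add_rank_fromRows_le _ _ _ _)
  constructor
  · obtain ⟨Z5, hZ5⟩ := exists_rank_fromBlocks_add_rank_le A1 A2 A4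
    have hpad := rank_fromBlocks_fromCols_zero_fromRows_zero_le (m₃ := Fin c) (n₃ := Fin f)
      A1 A2 A4 Z5
    have := lower 0 Z5 0 0 0 0
    exact ⟨0, Z5, 0, 0, 0, 0, by omega⟩
  · rintro r ⟨Z3, Z5, Z6, Z7, Z8, Z9, rfl⟩
    have := lower Z3 Z5 Z6 Z7 Z8 Z9
    omega
end
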